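/- arXiv:2112.02860 — 9 statements merged into one kernel-verified Lean document; each statement's English description precedes it below -/
import Mathlib

section
/- Let ℓ = 2^k · ℓ' with ℓ' odd and k = v_2(ℓ) ≥ 3, and let χ be the Dirichlet character of modulus 8 with χ(1) = χ(7) = 1 and χ(3) = χ(5) = -1. Define σ_ℓ(n) = Σ_{i ∈ (ℤ/ℓℤ)^×} χ(i) ζ_ℓ^{ni}. Then σ_ℓ(n) = 0 if v_2(n) ≠ k - 3, and if n = 2^{k-3} n' with n' odd, then σ_ℓ(n) = χ(ℓ'n') · 2^{k-2} · √2 · c_{ℓ'}(n'), where c_{ℓ'}(n') is the Ramanujan sum. -/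
open Complex

/-- The real Dirichlet character of modulus 8, with `χ(1)=χ(7)=1`, `χ(3)=χ(5)=-1`,
and `χ(i)=0` for even `i`. -/
def chi8 (i : ℕ) : ℤ :=
  if i % 8 = 1 ∨ i % 8 = 7 then 1 else if i % 8 = 3 ∨ i % 8 = 5 then -1 else 0

/-- Ramanujan sum: `c_ℓ(n) = ∑_{i ∈ (ℤ/ℓℤ)ˣ} ζ_ℓ^{ni}`. -/
noncomputable def ramanujanSum (ℓ n : ℕ) [NeZero ℓ] : ℂ :=
  ∑ i : (ZMod ℓ)ˣ, Complex.exp (2 * Real.pi * Complex.I * n * ((i : ZMod ℓ).val) / ℓ)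

/-- The twisted sum `σ_ℓ(n) = ∑_{i ∈ (ℤ/ℓℤ)ˣ} χ(i) ζ_ℓ^{ni}`. -/
noncomputable def sigmaSum (ℓ n : ℕ) [NeZero ℓ] : ℂ :=
  ∑ i : (ZMod ℓ)ˣ, (chi8 ((i : ZMod ℓ).val) : ℂ) *
    Complex.exp (2 * Real.pi * Complex.I * n * ((i : ZMod ℓ).val) / ℓ)

/-!
Write `ℓ = N * M` with `N = 2 ^ k` and `M = ℓ'`. The unit `M + N` of `ℤ/ℓ` is `≡ M mod N` and
`≡ N mod M`, so substituting `i ↦ (M + N) i` splits `ζ_ℓ^{n i}` into `ζ_N^{n i} ζ_M^{n i}`, and the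
Chinese remainder theorem factors `σ_ℓ(n) = χ(ℓ') σ_{2^k}(n) c_{ℓ'}(n)`.

In `σ_{2^k}(n)` the even residues contribute nothing, so it is a sum over all of `ℤ/2^k`. As
`χ(x + 4) = -χ(x)`, shifting `x` by `4` multiplies it by `-ζ_{2^k}^{4n}`; hence it vanishes unless
`ζ_{2^k}^{4n} = -1`, i.e. unless `v₂(n) = k - 3`. For `n = 2^{k-3} n'` the summand only depends on
`x mod 8`, so `σ_{2^k}(n)` is `2^{k-3}` times the Gauss sum of `χ` twisted by `n'`, which is
`χ(n') 2√2`. Finally `c_{ℓ'}(2^{k-3} n') = c_{ℓ'}(n')` because `2` is a unit mod `ℓ'`.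
-/

open Finset ZMod

theorem chi8_eq_χ₈ (n : ℕ) : chi8 n = χ₈ n := by
  rw [χ₈_nat_eq_if_mod_eight, chi8]
  split_ifs <;> omega

theorem padicValNat_eq_of_modEq {p j n : ℕ} [hp : Fact p.Prime] (h : n ≡ p ^ j [MOD p ^ (j + 1)]) :
    padicValNat p n = j := by
  have hmod : n % p ^ (j + 1) = p ^ j :=
    Eq.trans h (Nat.mod_eq_of_lt (Nat.pow_lt_pow_right hp.out.one_lt j.lt_succ_self))
  have hn : n = p ^ j * (p * (n / p ^ (j + 1)) + 1) := by
    conv_lhs => rw [← Nat.div_add_mod n (p ^ (j + 1)), hmod]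
    ring
  have hndvd : ¬ p ∣ p * (n / p ^ (j + 1)) + 1 := fun hdvd =>
    hp.out.one_lt.ne' (Nat.dvd_one.mp ((Nat.dvd_add_right (dvd_mul_right _ _)).mp hdvd))
  rw [hn, padicValNat.mul (pow_ne_zero _ hp.out.ne_zero) (Nat.succ_ne_zero _),
    padicValNat.prime_pow, padicValNat.eq_zero_of_not_dvd hndvd, add_zero]

theorem sum_units_eq_sum_of_map_nonunit {R M : Type*} [Monoid R] [Fintype R] [Fintype Rˣ]
    [AddCommMonoid M] {F : R → M} (hF : ∀ x, ¬ IsUnit x → F x = 0) :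
    ∑ u : Rˣ, F u = ∑ x, F x :=
  Fintype.sum_of_injective _ Units.val_injective _ _
    (fun x hx => hF x fun hu => hx ⟨hu.unit, rfl⟩) fun _ => rfl

theorem Function.Antiperiodic.sum_mul_addChar {G R : Type*} [AddCommGroup G] [Fintype G]
    [CommRing R] {F : G → R} {c : G} (hF : Function.Antiperiodic F c) (ψ : AddChar G R) :
    ∑ x, F x * ψ x = -(ψ c * ∑ x, F x * ψ x) := calc
  ∑ x, F x * ψ x = ∑ x, F (x + c) * ψ (x + c) := (Equiv.sum_comp (Equiv.addRight c) _).symm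
  _ = _ := by
    simp only [hF _, AddChar.map_add_eq_mul, mul_sum, ← sum_neg_distrib]
    exact sum_congr rfl fun x _ => by ring

namespace ZMod

theorem isUnit_cast_pow_iff {p i k : ℕ} [NeZero p] (hi : i ≠ 0) (hk : k ≠ 0) (x : ZMod (p ^ k)) :
    IsUnit (x.cast : ZMod (p ^ i)) ↔ IsUnit x := by
  rw [← natCast_val, isUnit_iff_coprime, Nat.coprime_pow_right_iff (Nat.pos_of_ne_zero hi),
    ← Nat.coprime_pow_right_iff (Nat.pos_of_ne_zero hk), ← isUnit_iff_coprime, natCast_zmod_val]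

theorem sum_cast_of_mul_eq {M : Type*} [AddCommMonoid M] {d e N : ℕ} [NeZero d] [NeZero N]
    (h : d * e = N) (F : ZMod d → M) :
    ∑ x : ZMod N, F x.cast = e • ∑ y, F y := by
  classical
  have hd : d ∣ N := Dvd.intro e h
  set φ := (castHom hd (ZMod d)).toAddMonoidHom
  have hfiber (y : ZMod d) : #{x | φ x = y} = #{x | φ x = 0} :=
    AddMonoidHom.card_fiber_eq_of_mem_range φ (castHom_surjective hd y) (castHom_surjective hd 0)
  have hker : #{x | φ x = 0} = e := by
    refine Nat.eq_of_mul_eq_mul_left (Nat.pos_of_neZero d) ?_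
    calc d * #{x | φ x = 0} = ∑ y : ZMod d, #{x | φ x = y} := by simp [hfiber]
      _ = d * e := by
        rw [← card_eq_sum_card_fiberwise (fun _ _ => mem_univ _), card_univ, ZMod.card, h]
  rw [← sum_fiberwise univ φ, smul_sum]
  refine sum_congr rfl fun y _ => ?_
  rw [sum_congr rfl fun x hx => show F x.cast = F y from congrArg F (mem_filter.mp hx).2,
    sum_const, hfiber, hker]

theorem sum_units_of_coprime {R : Type*} [CommSemiring R] {N M : ℕ} [NeZero N] [NeZero M]
    (h : N.Coprime M) (f : ZMod N → R) (g : ZMod M → R) :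
    ∑ i : (ZMod (N * M))ˣ, f (i : ZMod (N * M)).cast * g (i : ZMod (N * M)).cast =
      (∑ u : (ZMod N)ˣ, f u) * ∑ v : (ZMod M)ˣ, g v := by
  rw [sum_mul_sum, ← Fintype.sum_prod_type']
  exact Fintype.sum_equiv
    ((Units.mapEquiv (chineseRemainder h).toMulEquiv).trans MulEquiv.prodUnits) _ _ fun i => by
      simp [chineseRemainder, MulEquiv.prodUnits, Prod.fst_zmod_cast, Prod.snd_zmod_cast]

theorem stdAddChar_natCast_mul_eq_cexp (N n : ℕ) [NeZero N] (x : ZMod N) :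
    stdAddChar ((n : ZMod N) * x) = exp (2 * Real.pi * I * n * x.val / N) := by
  rw [← natCast_zmod_val x, ← Nat.cast_mul, stdAddChar_apply, toCircle_natCast,
    val_natCast_of_lt x.val_lt]
  push_cast
  ring_nf

theorem stdAddChar_natCast_mul_of_mul_eq {N M L : ℕ} [NeZero N] [NeZero L] (h : N * M = L)
    (z : ZMod L) : stdAddChar ((M : ZMod L) * z) = stdAddChar (z.cast : ZMod N) := by
  obtain ⟨j, rfl⟩ := natCast_zmod_surjective z
  rw [cast_natCast (Dvd.intro M h), ← Nat.cast_mul, stdAddChar_apply, stdAddChar_apply,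
    toCircle_natCast, toCircle_natCast, ← h]
  congr 1
  have hN : (N : ℂ) ≠ 0 := Nat.cast_ne_zero.mpr (NeZero.ne N)
  have hM : (M : ℂ) ≠ 0 := Nat.cast_ne_zero.mpr (right_ne_zero_of_mul (h ▸ NeZero.ne L))
  push_cast
  field_simp

theorem stdAddChar_natCast_add_mul {N M : ℕ} [NeZero N] [NeZero M] (x : ZMod (N * M)) :
    stdAddChar (((M + N : ℕ) : ZMod (N * M)) * x) =
      stdAddChar (x.cast : ZMod N) * stdAddChar (x.cast : ZMod M) := by
  rw [Nat.cast_add, add_mul, AddChar.map_add_eq_mul, stdAddChar_natCast_mul_of_mul_eq rfl,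
    stdAddChar_natCast_mul_of_mul_eq (mul_comm M N)]

theorem eq_natCast_of_stdAddChar_eq_neg_one {M N : ℕ} [NeZero N] (h : 2 * M = N) {x : ZMod N}
    (hx : stdAddChar x = -1) : x = M := by
  refine injective_stdAddChar (hx.trans ?_)
  have hM : (M : ℂ) ≠ 0 := Nat.cast_ne_zero.mpr (right_ne_zero_of_mul (h ▸ NeZero.ne N))
  rw [stdAddChar_apply, toCircle_natCast, ← h, Nat.cast_mul, Nat.cast_two,
    show 2 * Real.pi * I * M / (2 * M) = Real.pi * I by field_simp, exp_pi_mul_I]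

theorem stdAddChar_one_eight : (stdAddChar (1 : ZMod 8) : ℂ) = √2 / 2 * (1 + I) := by
  rw [← Nat.cast_one, stdAddChar_apply, toCircle_natCast,
    show 2 * Real.pi * I * ((1 : ℕ) : ℂ) / ((8 : ℕ) : ℂ) = (Real.pi / 4 : ℝ) * I by push_cast; ring,
    exp_mul_I, ← ofReal_cos, ← ofReal_sin, Real.cos_pi_div_four, Real.sin_pi_div_four]
  push_cast
  ring

end ZMod

theorem gaussSum_χ₈ : gaussSum (χ₈.ringHomComp (Int.castRingHom ℂ)) stdAddChar = 2 * √2 := by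
  obtain ⟨ζ, hζ, hpow⟩ : ∃ ζ : ℂ, ζ = √2 / 2 * (1 + I) ∧ ∀ a : ZMod 8, stdAddChar a = ζ ^ a.val :=
    ⟨stdAddChar (1 : ZMod 8), stdAddChar_one_eight, fun a => by
      rw [← AddChar.map_nsmul_eq_pow, nsmul_one, natCast_zmod_val]⟩
  have hsqrt : ((√2 : ℝ) : ℂ) ^ 2 = 2 := by rw [← ofReal_pow, Real.sq_sqrt zero_le_two]; norm_num
  have hζ2 : ζ ^ 2 = I := by rw [hζ]; linear_combination (1 + I) ^ 2 / 4 * hsqrt + 1 / 2 * I_sq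
  have hζ4 : ζ ^ 4 = -1 := by linear_combination (ζ ^ 2 + I) * hζ2 + I_sq
  rw [gaussSum, show (univ : Finset (ZMod 8)) = {0, 1, 2, 3, 4, 5, 6, 7} from rfl]
  simp (disch := decide) only [sum_insert, sum_singleton, MulChar.ringHomComp_apply, hpow,
    show χ₈ 0 = 0 from rfl, show χ₈ 1 = 1 from rfl, show χ₈ 2 = 0 from rfl,
    show χ₈ 3 = -1 from rfl, show χ₈ 4 = 0 from rfl, show χ₈ 5 = -1 from rfl,
    show χ₈ 6 = 0 from rfl, show χ₈ 7 = 1 from rfl, show (1 : ZMod 8).val = 1 from rfl,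
    show (3 : ZMod 8).val = 3 from rfl, show (5 : ZMod 8).val = 5 from rfl,
    show (7 : ZMod 8).val = 7 from rfl, map_zero, map_one, map_neg]
  linear_combination (ζ ^ 3 - ζ) * hζ4 - 2 * ζ * hζ2 + 2 * (1 - I) * hζ - (√2 : ℂ) * I_sq

theorem sum_χ₈_mul_stdAddChar_of_odd {m : ℕ} (hm : Odd m) :
    ∑ y : ZMod 8, (χ₈ y : ℂ) * stdAddChar ((m : ZMod 8) * y) = χ₈ m * (2 * √2) := by
  have hu : IsUnit (m : ZMod 8) :=
    (isUnit_iff_coprime m (2 ^ 3)).mpr (Nat.Coprime.pow_right 3 (Nat.coprime_two_right.mpr hm))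
  have hχ := (isQuadratic_χ₈.comp (Int.castRingHom ℂ)).inv
  have := gaussSum_mulShift_eq (χ₈.ringHomComp (Int.castRingHom ℂ)) stdAddChar hu.unit
  rw [hχ, gaussSum_χ₈, IsUnit.unit_spec] at this
  simpa [gaussSum, AddChar.mulShift_apply] using this

theorem sigmaSum_eq_sum_units (L n : ℕ) [NeZero L] :
    sigmaSum L n =
      ∑ i : (ZMod L)ˣ, (χ₈ (i : ZMod L).cast : ℂ) * stdAddChar ((n : ZMod L) * (i : ZMod L)) := by
  refine sum_congr rfl fun i _ => ?_
  rw [chi8_eq_χ₈, natCast_val, stdAddChar_natCast_mul_eq_cexp]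

theorem ramanujanSum_eq_sum_units (M n : ℕ) [NeZero M] :
    ramanujanSum M n = ∑ v : (ZMod M)ˣ, stdAddChar ((n : ZMod M) * (v : ZMod M)) := by
  simp only [ramanujanSum, stdAddChar_natCast_mul_eq_cexp]

theorem ramanujanSum_mul_left_of_coprime {M c : ℕ} [NeZero M] (hc : c.Coprime M) (n : ℕ) :
    ramanujanSum M (c * n) = ramanujanSum M n := by
  rw [ramanujanSum_eq_sum_units, ramanujanSum_eq_sum_units,
    ← Equiv.sum_comp (Equiv.mulLeft (unitOfCoprime c hc))
      (fun v => stdAddChar ((n : ZMod M) * (v : ZMod M)))]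
  refine sum_congr rfl fun v _ => ?_
  rw [Equiv.coe_mulLeft, Units.val_mul, coe_unitOfCoprime, Nat.cast_mul, mul_left_comm, mul_assoc]

theorem sigmaSum_mul_of_coprime {N M : ℕ} [NeZero N] [NeZero M] (h8 : 8 ∣ N) (h : N.Coprime M)
    (n : ℕ) : sigmaSum (N * M) n = χ₈ M * sigmaSum N n * ramanujanSum M n := by
  have hu : (M + N).Coprime (N * M) :=
    Nat.Coprime.mul_right (Nat.coprime_add_self_left.mpr h.symm) (Nat.coprime_self_add_left.mpr h)
  have hNM : 8 ∣ N * M := h8.mul_right M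
  have hcast (x : ZMod (N * M)) : ((x.cast : ZMod N).cast : ZMod 8) = x.cast :=
    RingHom.congr_fun (castHom_comp h8 (dvd_mul_right N M)) x
  calc sigmaSum (N * M) n
      = ∑ i : (ZMod (N * M))ˣ, (χ₈ (((M + N : ℕ) : ZMod (N * M)) * i).cast : ℂ) *
          stdAddChar (((M + N : ℕ) : ZMod (N * M)) * ((n : ZMod (N * M)) * (i : ZMod (N * M)))) := by
        rw [sigmaSum_eq_sum_units, ← Equiv.sum_comp (Equiv.mulLeft (unitOfCoprime _ hu))]
        refine sum_congr rfl fun i _ => ?_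
        rw [Equiv.coe_mulLeft, Units.val_mul, coe_unitOfCoprime, mul_left_comm]
    _ = χ₈ M * ∑ i : (ZMod (N * M))ˣ,
          (χ₈ ((i : ZMod (N * M)).cast : ZMod N).cast *
            stdAddChar ((n : ZMod N) * (i : ZMod (N * M)).cast)) *
            stdAddChar ((n : ZMod M) * (i : ZMod (N * M)).cast) := by
        rw [mul_sum]
        refine sum_congr rfl fun i _ => ?_
        rw [stdAddChar_natCast_add_mul, cast_mul hNM, map_mul, cast_natCast hNM, hcast,
          cast_mul (dvd_mul_right N M), cast_mul (dvd_mul_left M N),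
          cast_natCast (dvd_mul_right N M), cast_natCast (dvd_mul_left M N), Nat.cast_add,
          (natCast_eq_zero_iff N 8).mpr h8, add_zero]
        push_cast
        ring
    _ = χ₈ M * sigmaSum N n * ramanujanSum M n := by
        rw [mul_assoc, sigmaSum_eq_sum_units, ramanujanSum_eq_sum_units]
        congr 1
        exact sum_units_of_coprime h (fun u => (χ₈ u.cast : ℂ) * stdAddChar ((n : ZMod N) * u))
          (fun v => stdAddChar ((n : ZMod M) * v))

theorem eight_dvd_two_pow_add_three (j : ℕ) : 8 ∣ 2 ^ (j + 3) :=
  Dvd.intro_left _ (pow_add 2 j 3).symm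

theorem sigmaSum_two_pow_eq_sum (j n : ℕ) :
    sigmaSum (2 ^ (j + 3)) n =
      ∑ x : ZMod (2 ^ (j + 3)), (χ₈ x.cast : ℂ) * stdAddChar ((n : ZMod (2 ^ (j + 3))) * x) := by
  have hF (x : ZMod (2 ^ (j + 3))) (hx : ¬ IsUnit x) :
      (χ₈ x.cast : ℂ) * stdAddChar ((n : ZMod (2 ^ (j + 3))) * x) = 0 := by
    have : ¬ IsUnit (x.cast : ZMod (2 ^ 3)) :=
      mt (isUnit_cast_pow_iff three_ne_zero (Nat.succ_ne_zero _) x).mp hx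
    rw [MulChar.map_nonunit _ this, Int.cast_zero, zero_mul]
  rw [sigmaSum_eq_sum_units]
  exact sum_units_eq_sum_of_map_nonunit hF

theorem sigmaSum_two_pow_eq_zero {j n : ℕ} (hn : padicValNat 2 n ≠ j) :
    sigmaSum (2 ^ (j + 3)) n = 0 := by
  have hanti : Function.Antiperiodic (fun x : ZMod (2 ^ (j + 3)) => (χ₈ x.cast : ℂ)) 4 := fun x => by
    have hχ : ∀ y : ZMod 8, χ₈ (y + 4) = -χ₈ y := by decide
    have h8 := eight_dvd_two_pow_add_three j
    dsimp only
    rw [cast_add h8, show ((4 : ZMod (2 ^ (j + 3))).cast : ZMod 8) = 4 from map_ofNat (castHom h8 _) 4,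
      hχ, Int.cast_neg]
  have hψ : stdAddChar ((n : ZMod (2 ^ (j + 3))) * 4) + 1 ≠ 0 := fun h => by
    have h4n : ((n * 4 : ℕ) : ZMod (2 ^ (j + 3))) = ((2 ^ j * 4 : ℕ) : ZMod (2 ^ (j + 3))) := by
      rw [Nat.cast_mul, Nat.cast_ofNat, eq_natCast_of_stdAddChar_eq_neg_one (M := 2 ^ (j + 2))
        (by ring) (eq_neg_of_add_eq_zero_left h)]
      push_cast
      ring
    rw [natCast_eq_natCast_iff, show 2 ^ (j + 3) = 2 ^ (j + 1) * 4 by ring] at h4n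
    exact hn (padicValNat_eq_of_modEq (Nat.ModEq.mul_right_cancel' four_ne_zero h4n))
  have key := hanti.sum_mul_addChar (stdAddChar.mulShift n)
  simp only [AddChar.mulShift_apply] at key
  rw [sigmaSum_two_pow_eq_sum]
  exact eq_zero_of_ne_zero_of_mul_left_eq_zero hψ (by linear_combination key)

theorem sigmaSum_two_pow_mul_of_odd {j m : ℕ} (hm : Odd m) :
    sigmaSum (2 ^ (j + 3)) (2 ^ j * m) = χ₈ m * 2 ^ (j + 1) * √2 := by
  have h : 8 * 2 ^ j = 2 ^ (j + 3) := by ring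
  have h8 := eight_dvd_two_pow_add_three j
  rw [sigmaSum_two_pow_eq_sum]
  calc ∑ x : ZMod (2 ^ (j + 3)), (χ₈ x.cast : ℂ) *
          stdAddChar (((2 ^ j * m : ℕ) : ZMod (2 ^ (j + 3))) * x)
      = ∑ x : ZMod (2 ^ (j + 3)), (χ₈ x.cast : ℂ) * stdAddChar ((m : ZMod 8) * x.cast) := by
        refine sum_congr rfl fun x _ => ?_
        rw [Nat.cast_mul, mul_assoc, stdAddChar_natCast_mul_of_mul_eq h, cast_mul h8,
          cast_natCast h8]
    _ = 2 ^ j • ∑ y : ZMod 8, (χ₈ y : ℂ) * stdAddChar ((m : ZMod 8) * y) :=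
        sum_cast_of_mul_eq h fun y => (χ₈ y : ℂ) * stdAddChar ((m : ZMod 8) * y)
    _ = χ₈ m * 2 ^ (j + 1) * √2 := by
        rw [sum_χ₈_mul_stdAddChar_of_odd hm, nsmul_eq_mul]
        push_cast
        ring

theorem sigma_eval (k ℓ' ℓ : ℕ) (hk : 3 ≤ k) (hℓ' : Odd ℓ') (hℓ : ℓ = 2 ^ k * ℓ')
    [NeZero ℓ] [NeZero ℓ'] :
    (∀ n : ℕ, 0 < n → padicValNat 2 n ≠ k - 3 → sigmaSum ℓ n = 0) ∧
    (∀ n' : ℕ, Odd n' →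
      sigmaSum ℓ (2 ^ (k - 3) * n') =
        (chi8 (ℓ' * n') : ℂ) * 2 ^ (k - 2) * (Real.sqrt 2 : ℂ) * ramanujanSum ℓ' n') := by
  obtain ⟨j, rfl⟩ : ∃ j, k = j + 3 := ⟨k - 3, by omega⟩
  subst hℓ
  rw [Nat.add_sub_cancel, show j + 3 - 2 = j + 1 by omega]
  have h2 : Nat.Coprime 2 ℓ' := Nat.coprime_two_left.mpr hℓ'
  have hσ := sigmaSum_mul_of_coprime (eight_dvd_two_pow_add_three j) (h2.pow_left (j + 3))
  refine ⟨fun n _ hn => ?_, fun n' hn' => ?_⟩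
  · rw [hσ, sigmaSum_two_pow_eq_zero hn, mul_zero, zero_mul]
  · rw [hσ, ramanujanSum_mul_left_of_coprime (h2.pow_left j), sigmaSum_two_pow_mul_of_odd hn',
      chi8_eq_χ₈, Nat.cast_mul, map_mul]
    push_cast
    ring
end

section
/- Let q : V → 𝔽₂ be a quadratic form on a finite-dimensional 𝔽₂-vector space V of dimension k, with polarization b(x,y) = q(x+y) + q(x) + q(y), and let c be the dimension of the radical of b. Then Σ_{x ∈ V} (-1)^{q(x)} = ε(q) · 2^{(k+c)/2}, where ε(q) ∈ {0, 1, -1}; in particular |Σ_{x ∈ V} (-1)^{q(x)}| ∈ {0, 2^{(k+c)/2}}. -/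
private lemma chi_add (a b : ZMod 2) :
    ((-1 : ℤ)) ^ (a + b).val = (-1 : ℤ) ^ a.val * (-1 : ℤ) ^ b.val := by
  revert a b; decide

private lemma sum_chi_eq_zero {W : Type*} [AddCommGroup W] [Fintype W] (f : W → ZMod 2)
    (hadd : ∀ x y, f (x + y) = f x + f y) (hne : ∃ x, f x ≠ 0) :
    ∑ x : W, (-1 : ℤ) ^ (f x).val = 0 := by
  obtain ⟨x₀, hx₀⟩ := hne
  have h1 : f x₀ = 1 := by revert hx₀; generalize f x₀ = a; revert a; decide
  have key : ∑ x : W, (-1 : ℤ) ^ (f x).val = ∑ x : W, (-1 : ℤ) ^ (f (x₀ + x)).val :=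
    (Fintype.sum_equiv (Equiv.addLeft x₀) _ _ (fun x => rfl)).symm
  have key2 : ∀ x : W, (-1 : ℤ) ^ (f (x₀ + x)).val = -(-1 : ℤ) ^ (f x).val := by
    intro x
    rw [hadd, h1]
    generalize f x = a; revert a; decide
  rw [Finset.sum_congr rfl (fun x _ => key2 x), Finset.sum_neg_distrib] at key
  linarith

theorem charSum_quadratic_form_char_two
    (V : Type*) [AddCommGroup V] [Module (ZMod 2) V] [Fintype V]
    (q : V → ZMod 2)
    (hb : ∀ x y₁ y₂ : V,
      q (x + (y₁ + y₂)) + q x + q (y₁ + y₂) =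
        (q (x + y₁) + q x + q y₁) + (q (x + y₂) + q x + q y₂))
    (k c : ℕ) (hk : k = Module.finrank (ZMod 2) V)
    (hc : c = Module.finrank (ZMod 2)
      (Submodule.span (ZMod 2) {x : V | ∀ y : V, q (x + y) + q x + q y = 0})) :
    ∃ ε : ℤ, (ε = 0 ∨ ε = 1 ∨ ε = -1) ∧
      ∑ x : V, (-1 : ℤ) ^ (q x).val = ε * 2 ^ ((k + c) / 2) := by
  classical
  -- q 0 = 0
  have hq0 : q 0 = 0 := by
    have h := hb 0 0 0
    simp only [add_zero] at h
    revert h; generalize q 0 = a; revert a; decide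
  -- symmetry of b
  have hsymm : ∀ x y : V, q (x + y) + q x + q y = q (y + x) + q y + q x := by
    intro x y; rw [add_comm x y]; ring
  -- additivity in the first slot
  have haddl : ∀ z x₁ x₂ : V, q ((x₁ + x₂) + z) + q (x₁ + x₂) + q z =
      (q (x₁ + z) + q x₁ + q z) + (q (x₂ + z) + q x₂ + q z) := by
    intro z x₁ x₂
    rw [hsymm (x₁ + x₂) z, hsymm x₁ z, hsymm x₂ z]
    exact hb z x₁ x₂
  have hzero : ∀ y : V, q (0 + y) + q 0 + q y = 0 := by
    intro y
    rw [zero_add, hq0]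
    generalize q y = a; revert a; decide
  -- the radical as a submodule
  obtain ⟨M, hMcar⟩ : ∃ M : Submodule (ZMod 2) V,
      ∀ x, x ∈ M ↔ ∀ y, q (x + y) + q x + q y = 0 := by
    refine ⟨{ carrier := {x | ∀ y, q (x + y) + q x + q y = 0},
              add_mem' := ?_, zero_mem' := ?_, smul_mem' := ?_ }, fun x => Iff.rfl⟩
    · intro a b ha hb' y
      have h := haddl y a b
      rw [ha y, hb' y] at h
      simpa using h
    · exact hzero
    · intro t x hx
      have ht : t = 0 ∨ t = 1 := by revert t; decide
      rcases ht with h | h <;> subst h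
      · simpa [zero_smul] using hzero
      · simpa [one_smul] using hx
  have hspan : Submodule.span (ZMod 2) {x : V | ∀ y : V, q (x + y) + q x + q y = 0} = M := by
    have he : {x : V | ∀ y : V, q (x + y) + q x + q y = 0} = (M : Set V) := by
      ext x; exact (hMcar x).symm
    rw [he, Submodule.span_eq]
  rw [hspan] at hc
  haveI instM : Fintype ↥M := Fintype.ofFinite ↥M
  have hcardV : (Fintype.card V) = 2 ^ k := by
    rw [hk, Module.card_eq_pow_finrank (K := ZMod 2) (V := V), ZMod.card]
  have hcardM : (Fintype.card ↥M) = 2 ^ c := by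
    rw [hc, Module.card_eq_pow_finrank (K := ZMod 2) (V := ↥M), ZMod.card]
  set S : ℤ := ∑ x : V, (-1 : ℤ) ^ (q x).val with hS
  set T : ℤ := ∑ z : ↥M, (-1 : ℤ) ^ (q z).val with hT
  have hSS : S * S = 2 ^ k * T := by
    have step1 : S * S = ∑ x : V, ∑ y : V, (-1 : ℤ) ^ (q x).val * (-1 : ℤ) ^ (q y).val := by
      rw [hS, Finset.sum_mul_sum]
    have step2 : ∀ x : V, ∑ y : V, (-1 : ℤ) ^ (q x).val * (-1 : ℤ) ^ (q y).val
        = ∑ z : V, (-1 : ℤ) ^ (q z).val *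
            (-1 : ℤ) ^ (q (x + z) + q x + q z).val := by
      intro x
      rw [← (Fintype.sum_equiv (Equiv.addLeft x)
        (fun z => (-1 : ℤ) ^ (q x).val * (-1 : ℤ) ^ (q (x + z)).val)
        (fun y => (-1 : ℤ) ^ (q x).val * (-1 : ℤ) ^ (q y).val)
        (fun z => rfl))]
      refine Fintype.sum_congr _ _ (fun z => ?_)
      rw [← chi_add, ← chi_add]
      congr 1
      generalize q (x + z) = a; generalize q x = b; generalize q z = d
      revert a b d; decide
    have step3 : S * S = ∑ z : V, (-1 : ℤ) ^ (q z).val *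
        ∑ x : V, (-1 : ℤ) ^ (q (x + z) + q x + q z).val := by
      rw [step1, Finset.sum_congr rfl (fun x _ => step2 x), Finset.sum_comm]
      exact Finset.sum_congr rfl (fun z _ => (Finset.mul_sum _ _ _).symm)
    have inner : ∀ z : V, (∑ x : V, (-1 : ℤ) ^ (q (x + z) + q x + q z).val)
        = if z ∈ M then (2 : ℤ) ^ k else 0 := by
      intro z
      by_cases hz : z ∈ M
      · rw [if_pos hz]
        have hz' := (hMcar z).mp hz
        have hall : ∀ x : V, q (x + z) + q x + q z = 0 := by
          intro x; rw [hsymm x z]; exact hz' x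
        rw [Finset.sum_congr rfl (fun x _ => by rw [hall x])]
        simp [hcardV]
      · rw [if_neg hz]
        apply sum_chi_eq_zero
        · intro x₁ x₂
          have h := haddl z x₁ x₂
          revert h
          generalize q ((x₁ + x₂) + z) = a; generalize q (x₁ + x₂) = b
          generalize q (x₁ + z) = d; generalize q x₁ = e
          generalize q (x₂ + z) = f; generalize q x₂ = g; generalize q z = h
          revert a b d e f g h; decide
        · rw [hMcar] at hz
          push_neg at hz
          obtain ⟨y, hy⟩ := hz
          exact ⟨y, fun h => hy (by rw [hsymm z y]; exact h)⟩
    rw [step3, Finset.sum_congr rfl (fun z _ => by rw [inner z])]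
    rw [hT]
    rw [Finset.sum_congr rfl (fun z _ => (mul_ite (z ∈ M) ((-1 : ℤ) ^ (q z).val)
      ((2:ℤ)^k) 0).trans (by rw [mul_zero]))]
    rw [← Finset.sum_filter]
    rw [Finset.sum_subtype (p := (· ∈ M)) (Finset.univ.filter (· ∈ M)) (fun x => by simp)
      (fun z => (-1 : ℤ) ^ (q z).val * 2 ^ k)]
    rw [Finset.mul_sum]
    exact Finset.sum_congr rfl (fun z _ => mul_comm _ _)
  -- q is additive on M
  have hqM : ∀ z w : ↥M, q ((z + w : ↥M) : V) = q (z : V) + q (w : V) := by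
    intro z w
    have hz := (hMcar z.1).mp z.2 w.1
    have hco : ((z + w : ↥M) : V) = (z : V) + (w : V) := rfl
    rw [hco]
    revert hz
    generalize q ((z : V) + (w : V)) = a; generalize q (z : V) = b; generalize q (w : V) = d
    revert a b d; decide
  by_cases hq : ∀ z : ↥M, q (z : V) = 0
  · have hT2 : T = 2 ^ c := by
      rw [hT, Finset.sum_congr rfl (fun z _ => by rw [hq z])]
      simp [hcardM]
    have hS2 : S * S = 2 ^ (k + c) := by rw [hSS, hT2, pow_add]
    have hn : S.natAbs * S.natAbs = 2 ^ (k + c) := by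
      have h := congrArg Int.natAbs hS2
      rwa [Int.natAbs_mul, Int.natAbs_pow] at h
    have hdvd : S.natAbs ∣ 2 ^ (k + c) := ⟨S.natAbs, hn.symm⟩
    obtain ⟨m, hm, hmeq⟩ := (Nat.dvd_prime_pow Nat.prime_two).mp hdvd
    have h2m : m + m = k + c := by
      have h : (2:ℕ) ^ (m + m) = 2 ^ (k + c) := by rw [pow_add, ← hmeq]; exact hn
      exact Nat.pow_right_injective (le_refl 2) h
    have hdiv : (k + c) / 2 = m := by omega
    have habs : S = 2 ^ m ∨ S = -(2 ^ m) := by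
      rcases Int.natAbs_eq S with h | h
      · left; rw [h, hmeq]; push_cast; ring
      · right; rw [h, hmeq]; push_cast; ring
    rcases habs with h | h
    · exact ⟨1, Or.inr (Or.inl rfl), by rw [hdiv, h, one_mul]⟩
    · exact ⟨-1, Or.inr (Or.inr rfl), by rw [hdiv, h]; ring⟩
  · push_neg at hq
    have hT0 : T = 0 := by
      rw [hT]
      exact sum_chi_eq_zero _ hqM hq
    have hz : S * S = 0 := by rw [hSS, hT0, mul_zero]
    have hS0 : S = 0 := by
      rcases mul_eq_zero.mp hz with h | h <;> exact h
    exact ⟨0, Or.inl rfl, by rw [hS0, zero_mul]⟩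
end

section
/- With notation as in the setup (R a 2-linearized polynomial over 𝔽_{2^m}, f(x) = xR(x), q_n = Tr_{𝔽_{2^{mn}}/𝔽₂} ∘ f, N the degree of the splitting field of the kernel polynomial R̃ over 𝔽_{2^m}): if v_2(n) > v_2(N), then the restriction of q_n to the radical of its polarization b_n is identically zero; equivalently ε_n(f) ≠ 0. -/
open Finset Polynomial

local notation "Ω" => AlgebraicClosure (ZMod 2)

private lemma ppa (z : Ω) (a b : ℕ) : z ^ 2 ^ (a + b) = (z ^ 2 ^ a) ^ 2 ^ b := by
  rw [pow_add, pow_mul]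

private lemma ppc (z : Ω) (a b : ℕ) : (z ^ 2 ^ a) ^ 2 ^ b = (z ^ 2 ^ b) ^ 2 ^ a := by
  rw [← pow_mul, mul_comm, pow_mul]

private lemma pow_cycle {z : Ω} {t : ℕ} (hz : z ^ 2 ^ t = z) (k j : ℕ) :
    z ^ 2 ^ (k * t + j) = z ^ 2 ^ j := by
  induction k with
  | zero => simp
  | succ k ih =>
    have h : (k + 1) * t + j = t + (k * t + j) := by ring
    rw [h, ppa, hz, ih]

private lemma pow_cycle' {z : Ω} {t : ℕ} (hz : z ^ 2 ^ t = z) (k : ℕ) :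
    z ^ 2 ^ (k * t) = z := by simpa using pow_cycle hz k 0

private lemma tr_sq {c : ℕ} {z : Ω} (hz : z ^ 2 ^ c = z) :
    ∑ j ∈ range c, (z ^ 2) ^ 2 ^ j = ∑ j ∈ range c, z ^ 2 ^ j := by
  have h1 : ∀ j, (z ^ 2) ^ 2 ^ j = z ^ 2 ^ (j + 1) := fun j => by
    have h2 : 2 ^ (j + 1) = 2 * 2 ^ j := by ring
    rw [h2, pow_mul]
  have key : (∑ j ∈ range c, z ^ 2 ^ (j + 1)) + z ^ 2 ^ 0
      = (∑ j ∈ range c, z ^ 2 ^ j) + z ^ 2 ^ c := by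
    rw [← Finset.sum_range_succ' (fun j => z ^ 2 ^ j) c,
      Finset.sum_range_succ (fun j => z ^ 2 ^ j) c]
  simp only [pow_zero, pow_one, hz] at key
  simp only [h1]
  exact add_right_cancel key

private lemma tr_shift {c : ℕ} {z : Ω} (hz : z ^ 2 ^ c = z) (k : ℕ) :
    ∑ j ∈ range c, (z ^ 2 ^ k) ^ 2 ^ j = ∑ j ∈ range c, z ^ 2 ^ j := by
  induction k with
  | zero => simp
  | succ k ih =>
    have hz' : (z ^ 2 ^ k) ^ 2 ^ c = z ^ 2 ^ k := by rw [ppc, hz]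
    have h : z ^ 2 ^ (k + 1) = (z ^ 2 ^ k) ^ 2 := by rw [pow_succ, pow_mul]
    rw [h, tr_sq hz', ih]

private lemma fix_gcd (t : ℕ) {z : Ω} :
    ∀ a b : ℕ, z ^ 2 ^ (t * a) = z → z ^ 2 ^ (t * b) = z →
      z ^ 2 ^ (t * Nat.gcd a b) = z := by
  intro a b
  induction a, b using Nat.gcd.induction with
  | H0 b => intro _ h2; simpa using h2
  | H1 a b ha ih =>
    intro h1 h2
    rw [Nat.gcd_rec]
    refine ih ?_ h1
    have key : (b / a) * (t * a) + t * (b % a) = t * b := by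
      conv_rhs => rw [← Nat.div_add_mod b a]
      ring
    have h3 := pow_cycle h1 (b / a) (t * (b % a))
    rw [key, h2] at h3
    exact h3.symm

private lemma tr_block (t s : ℕ) {z : Ω} (hz : z ^ 2 ^ t = z) :
    ∑ j ∈ range (t * s), z ^ 2 ^ j = s • ∑ j ∈ range t, z ^ 2 ^ j := by
  induction s with
  | zero => simp
  | succ s ih =>
    have h : t * (s + 1) = t * s + t := by ring
    rw [h, ← Finset.sum_range_add_sum_Ico _ (Nat.le_add_right (t * s) t), ih,
      Finset.sum_Ico_eq_sum_range]
    simp only [Nat.add_sub_cancel_left]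
    have h2 : ∀ j, z ^ 2 ^ (t * s + j) = z ^ 2 ^ j := fun j => by
      have := pow_cycle hz s j
      rwa [mul_comm s t] at this
    simp only [h2, succ_nsmul]

private lemma exists_tr_ne_zero (c : ℕ) (hc : 0 < c) :
    ∃ z : Ω, z ^ 2 ^ c = z ∧ ∑ j ∈ range c, z ^ 2 ^ j ≠ 0 := by
  classical
  by_contra hcon
  push_neg at hcon
  set S : Polynomial Ω := X ^ 2 ^ c - X with hS
  set T : Polynomial Ω := ∑ j ∈ range c, X ^ 2 ^ j with hT
  have hsep : S.Separable := galois_poly_separable 2 (2 ^ c) (dvd_pow_self 2 hc.ne')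
  have hSd : S.natDegree = 2 ^ c := by
    rw [hS, natDegree_sub_eq_left_of_natDegree_lt, natDegree_X_pow]
    rw [natDegree_X_pow, natDegree_X]
    exact Nat.one_lt_two_pow hc.ne'
  have hSne : S ≠ 0 := by
    intro h
    rw [h, natDegree_zero] at hSd
    exact (Nat.two_pow_pos c).ne' hSd.symm
  have hroots : Multiset.card S.roots = 2 ^ c := by
    rw [← hSd]
    exact splits_iff_card_roots.mp (IsAlgClosed.splits S)
  have hnodup : S.roots.Nodup := nodup_roots hsep
  have hTcoeff : T.coeff (2 ^ (c - 1)) = 1 := by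
    rw [hT, finset_sum_coeff]
    have h1 : ∀ j ∈ range c, (X ^ 2 ^ j : Polynomial Ω).coeff (2 ^ (c - 1))
        = if c - 1 = j then 1 else 0 := by
      intro j hj
      rw [coeff_X_pow]
      congr 1
      refine propext ⟨fun h => ?_, fun h => by rw [h]⟩
      exact Nat.pow_right_injective (le_refl 2) h
    rw [Finset.sum_congr rfl h1, Finset.sum_ite_eq]
    simp [Nat.sub_lt hc one_pos]
  have hTne : T ≠ 0 := by
    intro h
    rw [h, coeff_zero] at hTcoeff
    exact zero_ne_one hTcoeff
  have hTdeg : T.natDegree ≤ 2 ^ (c - 1) := by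
    apply natDegree_sum_le_of_forall_le
    intro j hj
    rw [natDegree_X_pow]
    exact Nat.pow_le_pow_right (by norm_num) (Nat.le_pred_of_lt (mem_range.mp hj))
  have hsub : S.roots.toFinset ⊆ T.roots.toFinset := by
    intro z hz
    rw [Multiset.mem_toFinset, mem_roots'] at hz ⊢
    obtain ⟨-, hz⟩ := hz
    have hzF : z ^ 2 ^ c = z := by
      have h0 : z ^ 2 ^ c - z = 0 := by simpa [hS, IsRoot] using hz
      exact sub_eq_zero.mp h0
    refine ⟨hTne, ?_⟩
    have := hcon z hzF
    simp [hT, IsRoot, eval_finset_sum, this]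
  have hle : (2 : ℕ) ^ c ≤ 2 ^ (c - 1) := by
    calc 2 ^ c = S.roots.toFinset.card := by
          rw [Multiset.toFinset_card_of_nodup hnodup, hroots]
      _ ≤ T.roots.toFinset.card := Finset.card_le_card hsub
      _ ≤ Multiset.card T.roots := T.roots.toFinset_card_le
      _ ≤ T.natDegree := T.card_roots'
      _ ≤ 2 ^ (c - 1) := hTdeg
  have hlt : (2 : ℕ) ^ (c - 1) < 2 ^ c :=
    Nat.pow_lt_pow_right one_lt_two (Nat.sub_lt hc one_pos)
  omega

set_option maxHeartbeats 2000000 in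
/-- Work in `Ω`, an algebraic closure of `𝔽₂`; the subfield `𝔽_{2^{mn}}` is
`{x | x^{2^{mn}} = x}` and the trace `Tr_{𝔽_{2^{mn}}/𝔽₂}(z) = ∑_{j < mn} z^{2^j}`.
If `v₂(n) > v₂(N)` then the quadratic form `q_n = Tr ∘ f` vanishes identically on the
radical of its polarization, i.e. `ε_n(f) ≠ 0`. -/
theorem qn_vanishes_on_radical (m n d N : ℕ) (hm : 0 < m) (hn : 0 < n) (hN : 0 < N)
    (a : Fin (d + 1) → AlgebraicClosure (ZMod 2))
    (ha : ∀ i, a i ^ (2 ^ m) = a i) (had : a (Fin.last d) ≠ 0)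
    (R f Rtilde : AlgebraicClosure (ZMod 2) → AlgebraicClosure (ZMod 2))
    (hR : ∀ x, R x = ∑ i : Fin (d + 1), a i * x ^ (2 ^ (i : ℕ)))
    (hf : ∀ x, f x = x * R x)
    (hRt : ∀ x, Rtilde x = ∑ i : Fin (d + 1),
      (a i ^ (2 ^ d) * x ^ (2 ^ (d + (i : ℕ))) +
        a i ^ (2 ^ (d - (i : ℕ))) * x ^ (2 ^ (d - (i : ℕ)))))
    -- `𝔽_{2^{mN}}` is the splitting field of `R̃` over `𝔽_{2^m}`:
    (hsplit : ∀ x, Rtilde x = 0 → x ^ (2 ^ (m * N)) = x)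
    (hmin : ∀ N', 0 < N' → (∀ x, Rtilde x = 0 → x ^ (2 ^ (m * N')) = x) → N ≤ N')
    (hv : padicValNat 2 N < padicValNat 2 n)
    (q : AlgebraicClosure (ZMod 2) → AlgebraicClosure (ZMod 2))
    (hq : ∀ x, q x = ∑ j ∈ Finset.range (m * n), (f x) ^ (2 ^ j)) :
    ∀ x : AlgebraicClosure (ZMod 2), x ^ (2 ^ (m * n)) = x →
      (∀ y : AlgebraicClosure (ZMod 2), y ^ (2 ^ (m * n)) = y →
        q (x + y) + q x + q y = 0) →
      q x = 0 := by
  haveI : Fact (Nat.Prime 2) := ⟨Nat.prime_two⟩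
  intro x hx hrad
  set c := m * n with hc
  have hc0 : 0 < c := Nat.mul_pos hm hn
  set e := c * (d + 1) with he
  have haF : ∀ (i : Fin (d + 1)) (k : ℕ), a i ^ 2 ^ (m * k) = a i := by
    intro i k
    rw [mul_comm]
    exact pow_cycle' (ha i) k
  have haC : ∀ i, a i ^ 2 ^ c = a i := fun i => by rw [hc]; exact haF i n
  have hae : ∀ i, a i ^ 2 ^ e = a i := fun i => by
    rw [he, hc, mul_assoc]
    exact haF i (n * (d + 1))
  have hxe : x ^ 2 ^ e = x := by
    rw [he, mul_comm]
    exact pow_cycle' hx (d + 1)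
  have hie : ∀ i : Fin (d + 1), (i : ℕ) ≤ e := by
    intro i
    have h1 : (i : ℕ) < d + 1 := i.isLt
    have h2 : d + 1 ≤ e := by
      rw [he]
      exact Nat.le_mul_of_pos_left (d + 1) hc0
    omega
  set Rd : Ω := ∑ i : Fin (d + 1), a i ^ 2 ^ (e - (i : ℕ)) * x ^ 2 ^ (e - (i : ℕ)) with hRd
  have hRxF : (R x) ^ 2 ^ c = R x := by
    rw [hR, sum_pow_char_pow]
    refine Finset.sum_congr rfl fun i _ => ?_
    rw [mul_pow, haC, ppc, hx]
  have hRdF : Rd ^ 2 ^ c = Rd := by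
    rw [hRd, sum_pow_char_pow]
    refine Finset.sum_congr rfl fun i _ => ?_
    have hA : (a i ^ 2 ^ (e - (i : ℕ))) ^ 2 ^ c = a i ^ 2 ^ (e - (i : ℕ)) := by
      rw [ppc, haC]
    have hB : (x ^ 2 ^ (e - (i : ℕ))) ^ 2 ^ c = x ^ 2 ^ (e - (i : ℕ)) := by
      rw [ppc, hx]
    rw [mul_pow, hA, hB]
  set L : Ω := R x + Rd with hL
  have hLF : L ^ 2 ^ c = L := by rw [hL, add_pow_char_pow, hRxF, hRdF]
  -- the bilinear form vanishes at (x, ·) gives trace identity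
  have hres : ∀ y : Ω, y ^ 2 ^ c = y → ∑ j ∈ Finset.range c, (y * L) ^ 2 ^ j = 0 := by
    intro y hy
    have hye : y ^ 2 ^ e = y := by
      rw [he, mul_comm]
      exact pow_cycle' hy (d + 1)
    have hRadd : R (x + y) = R x + R y := by
      rw [hR, hR, hR, ← Finset.sum_add_distrib]
      refine Finset.sum_congr rfl fun i _ => ?_
      rw [add_pow_char_pow, mul_add]
    have h2 : (2 : Ω) = 0 := by
      have h := CharP.cast_eq_zero Ω 2
      exact_mod_cast h
    have hfadd : f (x + y) + f x + f y = x * R y + y * R x := by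
      rw [hf, hf, hf, hRadd]
      linear_combination (x * R x + y * R y) * h2
    have hb0 := hrad y hy
    rw [hq, hq, hq] at hb0
    have hcomb : ∑ j ∈ Finset.range c, (x * R y + y * R x) ^ 2 ^ j = 0 := by
      have hsum : ∑ j ∈ Finset.range c, (x * R y + y * R x) ^ 2 ^ j
          = (∑ j ∈ Finset.range c, (f (x + y)) ^ 2 ^ j
              + ∑ j ∈ Finset.range c, (f x) ^ 2 ^ j)
            + ∑ j ∈ Finset.range c, (f y) ^ 2 ^ j := by
        rw [← Finset.sum_add_distrib, ← Finset.sum_add_distrib]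
        refine Finset.sum_congr rfl fun j _ => ?_
        rw [← hfadd, add_pow_char_pow, add_pow_char_pow]
      rw [hsum]
      exact hb0
    have hadj : ∑ j ∈ Finset.range c, (x * R y) ^ 2 ^ j
        = ∑ j ∈ Finset.range c, (y * Rd) ^ 2 ^ j := by
      have hx1 : x * R y = ∑ i : Fin (d + 1), a i * x * y ^ 2 ^ (i : ℕ) := by
        rw [hR, Finset.mul_sum]
        exact Finset.sum_congr rfl fun i _ => by ring
      have hy1 : y * Rd = ∑ i : Fin (d + 1),
          y * (a i ^ 2 ^ (e - (i : ℕ)) * x ^ 2 ^ (e - (i : ℕ))) := by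
        rw [hRd, Finset.mul_sum]
      rw [hx1, hy1]
      simp only [sum_pow_char_pow]
      calc ∑ j ∈ Finset.range c, ∑ i : Fin (d + 1), (a i * x * y ^ 2 ^ (i : ℕ)) ^ 2 ^ j
          = ∑ i : Fin (d + 1), ∑ j ∈ Finset.range c, (a i * x * y ^ 2 ^ (i : ℕ)) ^ 2 ^ j :=
            Finset.sum_comm
        _ = ∑ i : Fin (d + 1), ∑ j ∈ Finset.range c,
              (y * (a i ^ 2 ^ (e - (i : ℕ)) * x ^ 2 ^ (e - (i : ℕ)))) ^ 2 ^ j := by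
            refine Finset.sum_congr rfl fun i _ => ?_
            set w := a i * x * y ^ 2 ^ (i : ℕ) with hw
            have hwF : w ^ 2 ^ c = w := by
              have h1 : (y ^ 2 ^ (i : ℕ)) ^ 2 ^ c = y ^ 2 ^ (i : ℕ) := by rw [ppc, hy]
              rw [hw, mul_pow, mul_pow, haC, hx, h1]
            have hkey : w ^ 2 ^ (e - (i : ℕ))
                = y * (a i ^ 2 ^ (e - (i : ℕ)) * x ^ 2 ^ (e - (i : ℕ))) := by
              have h1 : (y ^ 2 ^ (i : ℕ)) ^ 2 ^ (e - (i : ℕ)) = y := by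
                rw [← ppa, Nat.add_sub_cancel' (hie i), hye]
              rw [hw, mul_pow, mul_pow, h1]
              ring
            have h3 := tr_shift hwF (e - (i : ℕ))
            rw [hkey] at h3
            exact h3.symm
        _ = ∑ j ∈ Finset.range c, ∑ i : Fin (d + 1),
              (y * (a i ^ 2 ^ (e - (i : ℕ)) * x ^ 2 ^ (e - (i : ℕ)))) ^ 2 ^ j :=
            Finset.sum_comm
    calc ∑ j ∈ Finset.range c, (y * L) ^ 2 ^ j
        = ∑ j ∈ Finset.range c, ((y * R x) ^ 2 ^ j + (y * Rd) ^ 2 ^ j) := by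
          refine Finset.sum_congr rfl fun j _ => ?_
          have h4 : y * L = y * R x + y * Rd := by rw [hL]; ring
          rw [h4, add_pow_char_pow]
      _ = ∑ j ∈ Finset.range c, (y * R x) ^ 2 ^ j
            + ∑ j ∈ Finset.range c, (y * Rd) ^ 2 ^ j := Finset.sum_add_distrib
      _ = ∑ j ∈ Finset.range c, (y * R x) ^ 2 ^ j
            + ∑ j ∈ Finset.range c, (x * R y) ^ 2 ^ j := by rw [hadj]
      _ = ∑ j ∈ Finset.range c, ((x * R y) ^ 2 ^ j + (y * R x) ^ 2 ^ j) := by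
          rw [add_comm, ← Finset.sum_add_distrib]
      _ = ∑ j ∈ Finset.range c, (x * R y + y * R x) ^ 2 ^ j := by
          refine Finset.sum_congr rfl fun j _ => ?_
          rw [add_pow_char_pow]
      _ = 0 := hcomb
  -- non-degeneracy of the trace form: L = 0
  have hL0 : L = 0 := by
    by_contra hLne
    obtain ⟨z, hz1, hz2⟩ := exists_tr_ne_zero c hc0
    have hyF : (z * L⁻¹) ^ 2 ^ c = z * L⁻¹ := by
      rw [mul_pow, hz1, inv_pow, hLF]
    have h0 := hres (z * L⁻¹) hyF
    rw [mul_assoc, inv_mul_cancel₀ hLne, mul_one] at h0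
    exact hz2 h0
  -- hence Rtilde x = 0
  have hRt0 : Rtilde x = 0 := by
    have hcalc : Rtilde x = L ^ 2 ^ d := by
      rw [hRt, hL, add_pow_char_pow, hR, hRd, sum_pow_char_pow, sum_pow_char_pow,
        ← Finset.sum_add_distrib]
      refine Finset.sum_congr rfl fun i _ => ?_
      congr 1
      · rw [mul_pow, ← ppa, Nat.add_comm d (i : ℕ)]
      · have hd : (i : ℕ) ≤ d := Nat.lt_succ_iff.mp i.isLt
        have harith : e - (i : ℕ) + d = e + (d - (i : ℕ)) := by
          have := hie i; omega
        have h1 : (a i ^ 2 ^ (e - (i : ℕ))) ^ 2 ^ d = a i ^ 2 ^ (d - (i : ℕ)) := by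
          rw [← ppa, harith, ppa, hae]
        have h2 : (x ^ 2 ^ (e - (i : ℕ))) ^ 2 ^ d = x ^ 2 ^ (d - (i : ℕ)) := by
          rw [← ppa, harith, ppa, hxe]
        rw [mul_pow, h1, h2]
    rw [hcalc, hL0, zero_pow (Nat.two_pow_pos d).ne']
  have hxN : x ^ 2 ^ (m * N) = x := hsplit x hRt0
  have hxg : x ^ 2 ^ (m * Nat.gcd n N) = x := by
    refine fix_gcd m n N ?_ hxN
    rw [← hc]; exact hx
  set g := Nat.gcd n N with hg
  have hgn : g ∣ n := Nat.gcd_dvd_left n N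
  have hfxg : (f x) ^ 2 ^ (m * g) = f x := by
    have h1 : ∀ i, a i ^ 2 ^ (m * g) = a i := fun i => haF i g
    rw [hf, hR, mul_pow, sum_pow_char_pow, hxg]
    congr 1
    refine Finset.sum_congr rfl fun i _ => ?_
    rw [mul_pow, h1, ppc, hxg]
  rw [hq]
  have hc' : c = m * g * (n / g) := by
    rw [hc, mul_assoc, Nat.mul_div_cancel' hgn]
  rw [hc', tr_block (m * g) (n / g) hfxg]
  have hNne : N ≠ 0 := hN.ne'
  have h1 : padicValNat 2 g ≤ padicValNat 2 N := by
    have hd : (2 : ℕ) ^ padicValNat 2 g ∣ N :=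
      dvd_trans pow_padicValNat_dvd (Nat.gcd_dvd_right n N)
    exact (padicValNat_dvd_iff_le hNne).mp hd
  have h2 : padicValNat 2 (n / g) = padicValNat 2 n - padicValNat 2 g :=
    padicValNat.div_of_dvd hgn
  have h3 : 1 ≤ padicValNat 2 (n / g) := by omega
  obtain ⟨k, hk⟩ : 2 ∣ n / g := dvd_of_one_le_padicValNat h3
  rw [hk, mul_smul, two_nsmul, CharTwo.add_self_eq_zero]
end

section
/- Let α be an algebraic integer all of whose Galois conjugates (over ℚ) have complex absolute value 1. Then α is a root of unity. -/
open Polynomial IntermediateField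

theorem Polynomial.aeval_ringHom_eq_zero {A B : Type*} [Ring A] [Ring B] (φ : A →+* B)
    {p : ℤ[X]} {x : A} (hx : aeval x p = 0) : aeval (φ x) p = 0 := by
  simpa [hx] using aeval_algHom_apply φ.toIntAlgHom x p

/-- Every complex embedding of `K` sends `x` to a root of `p`, so all of them have norm one. -/
theorem NumberField.exists_pow_eq_one_of_roots_norm_eq_one {K : Type*} [Field K] [NumberField K]
    {p : ℤ[X]} (hp : p.Monic) {x : K} (hx : aeval x p = 0)
    (hroots : ∀ z : ℂ, aeval z p = 0 → ‖z‖ = 1) : ∃ n : ℕ, 0 < n ∧ x ^ n = 1 := by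
  obtain ⟨n, hn, hxn⟩ := NumberField.Embeddings.pow_eq_one_of_norm_eq_one K ℂ ⟨p, hp, hx⟩
    fun φ ↦ hroots _ (aeval_ringHom_eq_zero φ hx)
  exact ⟨n, hn, hxn⟩

/-- Kronecker's theorem: an algebraic integer all of whose conjugates have complex
absolute value `1` is a root of unity. -/
theorem kronecker_root_of_unity (α : ℂ) (hint : IsIntegral ℤ α)
    (hconj : ∀ x : ℂ, Polynomial.aeval x (minpoly ℤ α) = 0 → ‖x‖ = 1) :
    ∃ n : ℕ, 0 < n ∧ α ^ n = 1 := by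
  have : FiniteDimensional ℚ ℚ⟮α⟯ := adjoin.finiteDimensional hint.tower_top
  have : NumberField ℚ⟮α⟯ := ⟨⟩
  have hgen : aeval (AdjoinSimple.gen ℚ α) (minpoly ℤ α) = 0 := by
    rw [← aeval_algebraMap_eq_zero_iff ℂ, AdjoinSimple.algebraMap_gen, minpoly.aeval]
  obtain ⟨n, hn, hgen_pow⟩ :=
    NumberField.exists_pow_eq_one_of_roots_norm_eq_one (minpoly.monic hint) hgen hconj
  refine ⟨n, hn, ?_⟩
  simpa using congrArg (algebraMap ℚ⟮α⟯ ℂ) hgen_pow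
end

section
/- Let N = 2^a N' with N' odd, and suppose ℓ and n are positive integers with v_2(ℓ) = a + 1. Then: (1) if v_2(n) ≤ a - 1, the Ramanujan sum c_ℓ(n) = 0; (2) if v_2(n) = a, then c_ℓ(n) = c_ℓ(gcd(n, N)); (3) if v_2(n) ≥ a + 1, then c_ℓ(n) = -c_ℓ(gcd(n, N)). -/
/-!
As a function of `ℓ`, `c_ℓ(n)` is the sum of the `n`-th powers of the primitive `ℓ`-th roots of
unity. Summing over `d ∣ ℓ` gives the power sum over all `ℓ`-th roots of unity, which is
`ℓ · [ℓ ∣ n]`; by Möbius inversion `c_·(n) = μ * (d ↦ d · [d ∣ n])`, a multiplicative function.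
Write `ℓ = 2^(a+1) m` with `m` odd; then `m ∣ N`, so `c_m(n) = c_m(gcd(n, N))`, and
`c_ℓ(n) = (2^(a+1) [2^(a+1) ∣ n] - 2^a [2^a ∣ n]) c_m(n)`. The `2`-power factor is `0`, `-2^a`
or `2^a` in the three cases, and it is `-2^a` at `gcd(n, N)`.
-/

open Complex

open Finset Polynomial ArithmeticFunction

section RootsOfUnity

variable {R : Type*} [CommRing R] [IsDomain R]

theorem IsPrimitiveRoot.sum_nthRootsFinset_pow {ζ : R} {ℓ : ℕ} (hζ : IsPrimitiveRoot ζ ℓ)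
    (n : ℕ) : ∑ ξ ∈ nthRootsFinset ℓ (1 : R), ξ ^ n = if ℓ ∣ n then (ℓ : R) else 0 := by
  classical
  rw [nthRootsFinset_def, sum_eq_multiset_sum, Multiset.toFinset_val,
    Multiset.dedup_eq_self.mpr hζ.nthRoots_one_nodup, hζ.nthRoots_eq (one_pow ℓ),
    Multiset.map_map, ← range_val, ← sum_eq_multiset_sum]
  simp only [Function.comp_def, mul_one, pow_right_comm ζ _ n]
  split_ifs with h
  · simp [(hζ.pow_eq_one_iff_dvd n).mpr h]
  · have hζn : ζ ^ n - 1 ≠ 0 := sub_ne_zero.mpr fun h' => h ((hζ.pow_eq_one_iff_dvd n).mp h')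
    refine (mul_eq_zero.mp ?_).resolve_right hζn
    rw [geom_sum_mul, ← pow_mul, mul_comm, pow_mul, hζ.pow_eq_one, one_pow, sub_self]

theorem sum_divisors_sum_primitiveRoots_pow (ℓ n : ℕ) :
    ∑ d ∈ ℓ.divisors, ∑ ξ ∈ primitiveRoots d R, ξ ^ n
      = ∑ ξ ∈ nthRootsFinset ℓ (1 : R), ξ ^ n := by
  classical
  rw [IsPrimitiveRoot.nthRoots_one_eq_biUnion_primitiveRoots, sum_biUnion]
  exact fun d _ e _ hde => IsPrimitiveRoot.disjoint hde

end RootsOfUnity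

theorem ramanujanSum_eq_sum_primitiveRoots (ℓ n : ℕ) [NeZero ℓ] :
    ramanujanSum ℓ n = ∑ ξ ∈ primitiveRoots ℓ ℂ, ξ ^ n := by
  have hζ := Complex.isPrimitiveRoot_exp ℓ (NeZero.ne ℓ)
  set ζ := Complex.exp (2 * Real.pi * Complex.I / ℓ)
  have hterm (i : (ZMod ℓ)ˣ) :
      Complex.exp (2 * Real.pi * Complex.I * n * ((i : ZMod ℓ).val) / ℓ)
        = (ζ ^ (i : ZMod ℓ).val) ^ n := by
    rw [← pow_mul, ← Complex.exp_nat_mul]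
    congr 1
    push_cast
    ring
  rw [ramanujanSum]
  simp only [hterm]
  refine sum_bij (fun i _ => ζ ^ (i : ZMod ℓ).val) ?_ ?_ ?_ (fun _ _ => rfl)
  · intro i _
    rw [mem_primitiveRoots (NeZero.pos ℓ)]
    exact hζ.pow_of_coprime _ (ZMod.val_coe_unit_coprime i)
  · intro i _ j _ h
    exact Units.ext (ZMod.val_injective ℓ (hζ.pow_inj (ZMod.val_lt _) (ZMod.val_lt _) h))
  · intro ξ hξ
    rw [mem_primitiveRoots (NeZero.pos ℓ), hζ.isPrimitiveRoot_iff] at hξ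
    obtain ⟨i, hi, hcop, rfl⟩ := hξ
    refine ⟨ZMod.unitOfCoprime i hcop, mem_univ _, ?_⟩
    simp [ZMod.unitOfCoprime, ZMod.val_natCast, Nat.mod_eq_of_lt hi]

open scoped ArithmeticFunction.zeta ArithmeticFunction.Moebius

noncomputable def ramanujanFn (n : ℕ) : ArithmeticFunction ℂ :=
  ⟨fun d => ∑ ξ ∈ primitiveRoots d ℂ, ξ ^ n, by simp⟩

theorem ramanujanFn_apply (n d : ℕ) :
    ramanujanFn n d = ∑ ξ ∈ primitiveRoots d ℂ, ξ ^ n := rfl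

def idOnDivisors (R : Type*) [Semiring R] (n : ℕ) : ArithmeticFunction R :=
  ⟨fun d => if d ∣ n then (d : R) else 0, by simp⟩

@[simp]
theorem idOnDivisors_apply {R : Type*} [Semiring R] (n d : ℕ) :
    idOnDivisors R n d = if d ∣ n then (d : R) else 0 := rfl

theorem isMultiplicative_idOnDivisors (R : Type*) [Semiring R] (n : ℕ) :
    (idOnDivisors R n).IsMultiplicative := by
  refine ⟨by simp, fun {d e} hde => ?_⟩
  have hdvd : d * e ∣ n ↔ d ∣ n ∧ e ∣ n :=
    ⟨fun h => ⟨dvd_of_mul_right_dvd h, dvd_of_mul_left_dvd h⟩,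
      fun h => hde.mul_dvd_of_dvd_of_dvd h.1 h.2⟩
  simp only [idOnDivisors_apply, hdvd, Nat.cast_mul]
  split_ifs <;> simp_all

theorem ramanujanFn_mul_zeta (n : ℕ) : ramanujanFn n * ζ = idOnDivisors ℂ n := by
  ext ℓ
  rcases eq_or_ne ℓ 0 with rfl | hℓ
  · simp
  rw [coe_mul_zeta_apply]
  exact (sum_divisors_sum_primitiveRoots_pow ℓ n).trans
    ((Complex.isPrimitiveRoot_exp ℓ hℓ).sum_nthRootsFinset_pow n)

theorem ramanujanFn_eq_moebius_mul (n : ℕ) : ramanujanFn n = μ * idOnDivisors ℂ n := by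
  rw [← ramanujanFn_mul_zeta, mul_comm, mul_assoc, coe_zeta_mul_coe_moebius, mul_one]

theorem isMultiplicative_ramanujanFn (n : ℕ) : (ramanujanFn n).IsMultiplicative := by
  rw [ramanujanFn_eq_moebius_mul]
  exact isMultiplicative_moebius.intCast.mul (isMultiplicative_idOnDivisors ℂ n)

theorem moebius_mul_apply_prime_pow_succ {R : Type*} [Ring R] (f : ArithmeticFunction R)
    {p : ℕ} (hp : p.Prime) (k : ℕ) :
    ((μ : ArithmeticFunction R) * f) (p ^ (k + 1)) = f (p ^ (k + 1)) - f (p ^ k) := by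
  rw [mul_apply, Nat.sum_divisorsAntidiagonal (fun x y => (μ : ArithmeticFunction R) x * f y),
    Nat.sum_divisors_prime_pow hp, sum_range_succ', sum_range_succ']
  have hvanish (i : ℕ) : (μ (p ^ (i + 1 + 1)) : R) = 0 := by
    rw [moebius_apply_prime_pow hp (by omega)]; simp
  have hdiv : p ^ (k + 1) / p = p ^ k := by rw [pow_succ, Nat.mul_div_cancel _ hp.pos]
  simp [hvanish, moebius_apply_prime hp, hdiv, neg_add_eq_sub]

theorem ramanujanFn_prime_pow_succ_mul {p k m : ℕ} (hp : p.Prime) (hm : (p ^ (k + 1)).Coprime m)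
    (n : ℕ) : ramanujanFn n (p ^ (k + 1) * m)
      = ((if p ^ (k + 1) ∣ n then (p : ℂ) ^ (k + 1) else 0)
        - (if p ^ k ∣ n then (p : ℂ) ^ k else 0)) * ramanujanFn n m := by
  rw [(isMultiplicative_ramanujanFn n).map_mul_of_coprime hm, ramanujanFn_eq_moebius_mul,
    moebius_mul_apply_prime_pow_succ _ hp]
  simp

theorem ramanujanFn_gcd_of_dvd {m N : ℕ} (h : m ∣ N) (n : ℕ) :
    ramanujanFn (n.gcd N) m = ramanujanFn n m := by
  simp only [ramanujanFn_eq_moebius_mul, mul_apply, idOnDivisors_apply]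
  refine sum_congr rfl fun x hx => ?_
  have hxN : x.2 ∣ N :=
    (Nat.dvd_of_mem_divisors (Nat.snd_mem_divisors_of_mem_antidiagonal hx)).trans h
  simp [Nat.dvd_gcd_iff, hxN]

theorem ramanujan_sum_twoAdic_general (a N' N ℓ : ℕ) (hN' : Odd N') (hN : N = 2 ^ a * N')
    [NeZero ℓ] (hℓdvd : ℓ ∣ 2 * N) (hℓ : padicValNat 2 ℓ = a + 1) :
    ∀ n : ℕ, 0 < n →
      (padicValNat 2 n + 1 ≤ a → ramanujanSum ℓ n = 0) ∧
      (padicValNat 2 n = a → ramanujanSum ℓ n = ramanujanSum ℓ (Nat.gcd n N)) ∧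
      (a + 1 ≤ padicValNat 2 n → ramanujanSum ℓ n = -ramanujanSum ℓ (Nat.gcd n N)) := by
  intro n hn
  set m := ℓ.divMaxPow 2
  have hℓm : 2 ^ (a + 1) * m = ℓ := hℓ ▸ Nat.pow_padicValNat_mul_divMaxPow 2 ℓ
  have hcop : (2 ^ (a + 1)).Coprime m :=
    (Nat.prime_two.coprime_iff_not_dvd.mpr
      (Nat.not_dvd_divMaxPow one_lt_two (NeZero.ne ℓ))).pow_left _
  have hmN : m ∣ N := by
    have hm : m ∣ 2 ^ (a + 1) * N' := by
      rw [pow_succ', mul_assoc, ← hN]; exact (Dvd.intro_left _ hℓm).trans hℓdvd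
    exact (hcop.symm.dvd_of_dvd_mul_left hm).trans (Dvd.intro_left _ hN.symm)
  have hsplit (k : ℕ) : ramanujanSum ℓ k = ((if 2 ^ (a + 1) ∣ k then 2 ^ (a + 1) else 0)
      - (if 2 ^ a ∣ k then 2 ^ a else 0)) * ramanujanFn k m := by
    rw [ramanujanSum_eq_sum_primitiveRoots, ← ramanujanFn_apply, ← hℓm,
      ramanujanFn_prime_pow_succ_mul Nat.prime_two hcop, Nat.cast_ofNat]
  have hgcd1 : ¬ 2 ^ (a + 1) ∣ n.gcd N := by
    rw [Nat.dvd_gcd_iff, hN, pow_succ, Nat.mul_dvd_mul_iff_left (by positivity)]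
    exact fun h => hN'.not_two_dvd_nat h.2
  have hgcd0 : 2 ^ a ∣ n.gcd N ↔ 2 ^ a ∣ n := by
    rw [Nat.dvd_gcd_iff, and_iff_left (Dvd.intro _ hN.symm)]
  have hv0 : 2 ^ a ∣ n ↔ a ≤ padicValNat 2 n := padicValNat_dvd_iff_le hn.ne'
  have hv1 : 2 ^ (a + 1) ∣ n ↔ a + 1 ≤ padicValNat 2 n := padicValNat_dvd_iff_le hn.ne'
  simp only [hsplit, ramanujanFn_gcd_of_dvd hmN, hgcd1, hgcd0, hv0, hv1, if_false]
  refine ⟨fun h => ?_, fun h => ?_, fun h => ?_⟩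
  · rw [if_neg (by omega), if_neg (by omega), sub_zero, zero_mul]
  · rw [h, if_neg (by omega)]
  · rw [if_pos h, if_pos (by omega)]
    ring

theorem ramanujan_sum_twoAdic (a N' N ℓ : ℕ) (hN' : Odd N') (hN : N = 2 ^ a * N')
    [NeZero N'] [NeZero ℓ] (hℓdvd : ℓ ∣ 2 * N) (hℓ : padicValNat 2 ℓ = a + 1) :
    ∀ n : ℕ, 0 < n →
      (padicValNat 2 n + 1 ≤ a → ramanujanSum ℓ n = 0) ∧
      (padicValNat 2 n = a → ramanujanSum ℓ n = ramanujanSum ℓ (Nat.gcd n N)) ∧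
      (a + 1 ≤ padicValNat 2 n → ramanujanSum ℓ n = -ramanujanSum ℓ (Nat.gcd n N)) :=
  ramanujan_sum_twoAdic_general a N' N ℓ hN' hN hℓdvd hℓ
end

section
/- Let h ≥ 1, q₀ = 2^h, q = 2^{2h+1}. For the additive polynomial R(x) = x^{2q₀} + x^{q₀} over 𝔽₂, the kernel polynomial R̃(x) = x^{2q} + x^q + x² + x factors as (x^q + x) ∘ (x² + x), its roots form an 𝔽₂-vector space of dimension 2h+2 contained in 𝔽_{q²}, and its splitting field over 𝔽₂ is 𝔽_{q²} (i.e., the roots generate 𝔽_{q²} as they span the 𝔽₂-subspace of 𝔽_{q²} generated by 𝔽_q ∪ 𝔽₄). -/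
/-!
Over any ring of characteristic 2 the maps `x ↦ x ^ 2 ^ m` are additive, which gives the
factorisation and the additivity of `R̃`. Writing `P = X ^ q + X`, we have `R̃ = P ^ 2 - P` and
`X ^ (q ^ 2) - X = P ^ q - P`, so `R̃` divides `X ^ (q ^ 2) - X` and splits over `𝔽_{q²}`; its
derivative is `1`, so it is separable and has exactly `deg R̃ = 2q` roots there. If all of them are
fixed by `x ↦ x ^ 2 ^ k`, they are fixed by `x ↦ x ^ 2 ^ d` with `d = gcd(k, 2(2h+1))`, whence
`2q ≤ 2 ^ d`; the only divisor `d` of `2(2h+1)` this large is `2(2h+1)` itself.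
-/

open Polynomial Finset

noncomputable def kernelPoly (R : Type*) [CommRing R] (n : ℕ) : R[X] :=
  X ^ 2 ^ (n + 1) + X ^ 2 ^ n + X ^ 2 + X

theorem sq_sub_self_dvd_pow_sub_self {R : Type*} [CommRing R] (a : R) {k : ℕ} (hk : k ≠ 0) :
    a ^ 2 - a ∣ a ^ k - a := by
  obtain ⟨m, rfl⟩ := Nat.exists_eq_succ_of_ne_zero hk
  have hsq : a ^ 2 - a = a * (a - 1) := by ring
  have hpow : a ^ (m + 1) - a = a * (a ^ m - 1) := by ring
  rw [hsq, hpow]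
  exact mul_dvd_mul_left a (sub_one_dvd_pow_sub_one a m)

theorem FiniteField.pow_natCard_pow {K : Type*} [Field K] [Finite K] (x : K) (m : ℕ) :
    x ^ Nat.card K ^ m = x := by
  have := Fintype.ofFinite K
  rw [Nat.card_eq_fintype_card]
  exact FiniteField.pow_card_pow m x

theorem pow_pow_gcd_eq_self {M : Type*} [Monoid M] {x : M} {p a b : ℕ}
    (ha : x ^ p ^ a = x) (hb : x ^ p ^ b = x) : x ^ p ^ a.gcd b = x := by
  have periodic (m : ℕ) : x ^ p ^ m = x ↔ Function.IsPeriodicPt (· ^ p) m x := by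
    rw [Function.IsPeriodicPt, Function.IsFixedPt, pow_iterate]
  exact (periodic _).2 (((periodic a).1 ha).gcd ((periodic b).1 hb))

theorem card_le_of_forall_pow_eq_self {K : Type*} [Field K] {s : Finset K} {m : ℕ} (hm : 1 < m)
    (hs : ∀ x ∈ s, x ^ m = x) : #s ≤ m := by
  have hne := FiniteField.X_pow_card_sub_X_ne_zero K hm
  refine (card_le_degree_of_subset_roots fun x hx => ?_).trans
    (FiniteField.X_pow_card_sub_X_natDegree_eq K hm).le
  simp [mem_roots hne, hs x hx]

theorem card_le_pow_gcd_of_forall_pow_eq_self {K : Type*} [Field K] [Finite K] {p N k : ℕ}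
    (hp : 1 < p) (hK : Nat.card K = p ^ N) (hk : k ≠ 0) {s : Finset K}
    (hs : ∀ x ∈ s, x ^ p ^ k = x) : #s ≤ p ^ k.gcd N := by
  refine card_le_of_forall_pow_eq_self (Nat.one_lt_pow (Nat.gcd_ne_zero_left hk) hp)
    fun x hx => pow_pow_gcd_eq_self (hs x hx) ?_
  simpa [hK] using FiniteField.pow_natCard_pow x 1

theorem card_roots_toFinset_eq_natDegree {K : Type*} [Field K] [DecidableEq K] {p : K[X]}
    (hsep : p.Separable) (hsplit : p.Splits) : #p.roots.toFinset = p.natDegree := by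
  rw [Multiset.toFinset_card_of_nodup (nodup_roots hsep), hsplit.natDegree_eq_card_roots]

section CommRing

variable {R : Type*} [CommRing R] {n : ℕ}

@[simp]
theorem eval_kernelPoly (x : R) :
    (kernelPoly R n).eval x = x ^ 2 ^ (n + 1) + x ^ 2 ^ n + x ^ 2 + x := by
  simp [kernelPoly]

theorem natDegree_kernelPoly [Nontrivial R] (hn : n ≠ 0) :
    (kernelPoly R n).natDegree = 2 ^ (n + 1) := by
  have hlt : 2 < 2 ^ (n + 1) := by
    calc 2 = 2 ^ 1 := rfl
      _ < 2 ^ (n + 1) := Nat.pow_lt_pow_right one_lt_two (by omega)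
  have hle : 2 ^ n ≤ 2 ^ (n + 1) := Nat.pow_le_pow_right two_pos n.le_succ
  unfold kernelPoly
  compute_degree!
  · simp [hlt.ne', (one_lt_two.trans hlt).ne]
  all_goals simp only [hle, hlt.le, and_self]

variable [CharP R 2]

theorem kernelPoly_eq_comp : kernelPoly R n = (X ^ 2 ^ n + X).comp (X ^ 2 + X) := by
  simp only [kernelPoly, add_comp, X_pow_comp, X_comp, add_pow_char_pow, ← pow_mul, ← pow_succ']
  ring

theorem eval_kernelPoly_add (x y : R) :
    (kernelPoly R n).eval (x + y) = (kernelPoly R n).eval x + (kernelPoly R n).eval y := by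
  simp only [eval_kernelPoly, add_pow_char_pow, CharTwo.add_sq]
  ring

theorem kernelPoly_dvd_X_pow_sub_X : kernelPoly R n ∣ X ^ 2 ^ (2 * n) - X := by
  have hsq : kernelPoly R n = (X ^ 2 ^ n + X) ^ 2 - (X ^ 2 ^ n + X) := by
    rw [kernelPoly, CharTwo.sub_eq_add, CharTwo.add_sq, ← pow_mul, ← pow_succ]
    ring
  have hpow : (X ^ 2 ^ (2 * n) - X : R[X]) = (X ^ 2 ^ n + X) ^ 2 ^ n - (X ^ 2 ^ n + X) := by
    rw [add_pow_char_pow, ← pow_mul, ← pow_add, ← two_mul, CharTwo.sub_eq_add,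
      CharTwo.sub_eq_add, add_assoc, CharTwo.add_cancel_left]
  rw [hsq, hpow]
  exact sq_sub_self_dvd_pow_sub_self _ (pow_ne_zero n two_ne_zero)

theorem derivative_kernelPoly (hn : n ≠ 0) : derivative (kernelPoly R n) = 1 := by
  simp [kernelPoly, derivative_X_pow, hn, one_add_one_eq_two, CharTwo.two_eq_zero]

theorem separable_kernelPoly (hn : n ≠ 0) : (kernelPoly R n).Separable := by
  rw [separable_def, derivative_kernelPoly hn]
  exact isCoprime_one_right

end CommRing

section FiniteField

variable {K : Type*} [Field K] [Finite K] [CharP K 2] {n : ℕ}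

theorem splits_kernelPoly (hK : Nat.card K = 2 ^ (2 * n)) : (kernelPoly K n).Splits := by
  have hne : (X ^ Nat.card K - X : K[X]) ≠ 0 :=
    FiniteField.X_pow_card_sub_X_ne_zero K Finite.one_lt_card
  exact splits_X_pow_nat_card_sub_X.of_dvd hne (hK ▸ kernelPoly_dvd_X_pow_sub_X)

theorem card_roots_toFinset_kernelPoly [DecidableEq K] (hK : Nat.card K = 2 ^ (2 * n))
    (hn : n ≠ 0) : #(kernelPoly K n).roots.toFinset = 2 ^ (n + 1) := by
  rw [card_roots_toFinset_eq_natDegree (separable_kernelPoly hn) (splits_kernelPoly hK),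
    natDegree_kernelPoly hn]

theorem dvd_of_forall_isRoot_kernelPoly_pow_eq_self (hK : Nat.card K = 2 ^ (2 * n)) (hn : n ≠ 0)
    {k : ℕ} (hk : k ≠ 0) (hfix : ∀ x, (kernelPoly K n).IsRoot x → x ^ 2 ^ k = x) :
    2 * n ∣ k := by
  classical
  have hcard := card_le_pow_gcd_of_forall_pow_eq_self one_lt_two hK hk
    (s := (kernelPoly K n).roots.toFinset) fun x hx =>
      hfix x (isRoot_of_mem_roots (Multiset.mem_toFinset.1 hx))
  rw [card_roots_toFinset_kernelPoly hK hn, Nat.pow_le_pow_iff_right one_lt_two] at hcard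
  exact Nat.gcd_eq_right_iff_dvd.1
    (Nat.eq_of_dvd_of_lt_two_mul (by omega) (Nat.gcd_dvd_right k (2 * n)) (by omega)).symm

end FiniteField

theorem suzuki_kernel_polynomial_general (h : ℕ)
    (Rtilde : GaloisField 2 (2 * (2 * h + 1)) → GaloisField 2 (2 * (2 * h + 1)))
    (hRt : ∀ x, Rtilde x = x ^ (2 ^ (2 * h + 2)) + x ^ (2 ^ (2 * h + 1)) + x ^ 2 + x) :
    (∀ t, Rtilde t = (t ^ 2 + t) ^ (2 ^ (2 * h + 1)) + (t ^ 2 + t)) ∧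
    (∀ x y, Rtilde x = 0 → Rtilde y = 0 → Rtilde (x + y) = 0) ∧
    Nat.card {x : GaloisField 2 (2 * (2 * h + 1)) | Rtilde x = 0} = 2 ^ (2 * h + 2) ∧
    (∀ k : ℕ, 0 < k →
      ((∀ x, Rtilde x = 0 → x ^ (2 ^ k) = x) ↔ 2 * (2 * h + 1) ∣ k)) := by
  classical
  have hK : Nat.card (GaloisField 2 (2 * (2 * h + 1))) = 2 ^ (2 * (2 * h + 1)) :=
    GaloisField.card 2 _ (by omega)
  have hn : 2 * h + 1 ≠ 0 := by omega
  set f := kernelPoly (GaloisField 2 (2 * (2 * h + 1))) (2 * h + 1)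
  have hR x : Rtilde x = f.eval x := by rw [hRt, eval_kernelPoly]
  have hroots : {x | Rtilde x = 0} = ↑f.roots.toFinset := by
    ext x
    simp [hR, mem_roots (separable_kernelPoly hn).ne_zero, f]
  refine ⟨fun t => ?_, fun x y hx hy => ?_, ?_, fun k hk => ⟨fun hfix => ?_, ?_⟩⟩
  · simp [hR, f, kernelPoly_eq_comp]
  · rw [hR, eval_kernelPoly_add, ← hR, ← hR, hx, hy, add_zero]
  · rw [hroots, Nat.card_coe_set_eq, Set.ncard_coe_finset, card_roots_toFinset_kernelPoly hK hn]
  · exact dvd_of_forall_isRoot_kernelPoly_pow_eq_self hK hn hk.ne' fun x hx => hfix x (by rwa [hR])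
  · rintro ⟨m, rfl⟩ x -
    rw [pow_mul, ← hK, FiniteField.pow_natCard_pow]

/-- The kernel polynomial of the Suzuki curve: with `q₀ = 2^h`, `q = 2^{2h+1}` and
`R(x) = x^{2q₀} + x^{q₀}`, the polynomial `R̃(x) = x^{2q} + x^q + x² + x` factors as
`(x^q + x) ∘ (x² + x)`, its roots form an `𝔽₂`-subspace of `𝔽_{q²}` of dimension
`2h + 2` (so cardinality `2^{2h+2}`), and its splitting field over `𝔽₂` is `𝔽_{q²}`
(its roots lie in `𝔽_{2^k}` exactly when `2(2h+1) ∣ k`). -/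
theorem suzuki_kernel_polynomial (h : ℕ) (hh : 1 ≤ h)
    (Rtilde : GaloisField 2 (2 * (2 * h + 1)) → GaloisField 2 (2 * (2 * h + 1)))
    (hRt : ∀ x, Rtilde x = x ^ (2 ^ (2 * h + 2)) + x ^ (2 ^ (2 * h + 1)) + x ^ 2 + x) :
    (∀ t, Rtilde t = (t ^ 2 + t) ^ (2 ^ (2 * h + 1)) + (t ^ 2 + t)) ∧
    (∀ x y, Rtilde x = 0 → Rtilde y = 0 → Rtilde (x + y) = 0) ∧
    Nat.card {x : GaloisField 2 (2 * (2 * h + 1)) | Rtilde x = 0} = 2 ^ (2 * h + 2) ∧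
    (∀ k : ℕ, 0 < k →
      ((∀ x, Rtilde x = 0 → x ^ (2 ^ k) = x) ↔ 2 * (2 * h + 1) ∣ k)) :=
  suzuki_kernel_polynomial_general h Rtilde hRt
end

section
/- Let h ≥ 1, q₀ = 2^h, q = 2^{2h+1}, f(x) = x^{q₀}(x^q + x). For every n ≥ 1, let c be the 𝔽₂-dimension of Ker(R̃) ∩ 𝔽_{2^n}, where R̃(x) = x^{2q} + x^q + x² + x. Then c equals gcd(n, 2h+1) if n is odd, and gcd(n, 2h+1) + 1 if n is even. -/
open Polynomial

private lemma suz_pow_mul {M : Type*} [Monoid M] (x : M) (a : ℕ) (hx : x ^ 2 ^ a = x) :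
    ∀ k : ℕ, x ^ 2 ^ (a * k) = x := by
  intro k
  induction k with
  | zero => simp
  | succ k ih => rw [Nat.mul_succ, pow_add, pow_mul, ih, hx]

private lemma suz_frob_inj {F : Type*} [Field F] [CharP F 2] (K : ℕ) {x y : F}
    (hxy : x ^ 2 ^ K = y ^ 2 ^ K) : x = y := by
  apply (iterateFrobenius F 2 K).injective
  rwa [iterateFrobenius_def, iterateFrobenius_def]

private lemma suz_gcd {F : Type*} [Field F] [CharP F 2] (x : F) :
    ∀ a b : ℕ, x ^ 2 ^ a = x → x ^ 2 ^ b = x → x ^ 2 ^ Nat.gcd a b = x := by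
  intro a b
  induction a, b using Nat.gcd.induction with
  | H0 b => intro _ hb; simpa using hb
  | H1 a b ha ih =>
    intro hxa hxb
    rw [Nat.gcd_rec]
    refine ih ?_ hxa
    have hQ : x ^ 2 ^ (a * (b / a)) = x := suz_pow_mul x a hxa _
    apply suz_frob_inj (a * (b / a))
    rw [← pow_mul, ← pow_add, show b % a + a * (b / a) = b from Nat.mod_add_div b a, hxb, hQ]

private lemma suz_card {F : Type*} [Field F] [Fintype F] [DecidableEq F] [CharP F 2]
    (n s : ℕ) (hcard : Fintype.card F = 2 ^ n) (hs : 0 < s) (hsn : s ∣ n) :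
    Nat.card {x : F | x ^ 2 ^ s = x} = 2 ^ s := by
  have hn : 0 < n := by
    rcases Nat.eq_zero_or_pos n with h0 | h; swap; · exact h
    have := Fintype.one_lt_card (α := F)
    rw [hcard, h0, pow_zero] at this; omega
  set d : ℕ := 2 ^ s - 1 with hd_def
  have hd2 : 2 ^ s = d + 1 := by
    have : 1 ≤ 2 ^ s := Nat.one_le_two_pow
    omega
  have hd : 0 < d := by
    have : 2 ≤ 2 ^ s := by
      calc 2 = 2 ^ 1 := (pow_one 2).symm
      _ ≤ 2 ^ s := Nat.pow_le_pow_right (by norm_num) hs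
    omega
  have hN : Fintype.card Fˣ = 2 ^ n - 1 := by rw [Fintype.card_units, hcard]
  have hdvd : d ∣ Fintype.card Fˣ := by
    rw [hN]
    have h1 : (2 ^ s) ^ (n / s) = 2 ^ n := by
      rw [← pow_mul, Nat.mul_div_cancel' hsn]
    have := Nat.sub_dvd_pow_sub_pow (2 ^ s) 1 (n / s)
    rwa [one_pow, h1] at this
  have hNpos : 0 < Fintype.card Fˣ := by
    rw [hN]
    have : 2 ≤ 2 ^ n := by
      calc 2 = 2 ^ 1 := (pow_one 2).symm
      _ ≤ 2 ^ n := Nat.pow_le_pow_right (by norm_num) hn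
    omega
  obtain ⟨g, hg⟩ := IsCyclic.exists_ofOrder_eq_natCard (α := Fˣ)
  rw [Nat.card_eq_fintype_card] at hg
  set N := Fintype.card Fˣ with hN_def
  have horder : orderOf (g ^ (N / d)) = d := by
    rw [orderOf_pow, hg, Nat.gcd_eq_right (Nat.div_dvd_of_dvd hdvd),
      Nat.div_div_self hdvd hNpos.ne']
  have horder' : orderOf ((g ^ (N / d) : Fˣ) : F) = d := by
    rw [orderOf_units, horder]
  have hprim : IsPrimitiveRoot ((g ^ (N / d) : Fˣ) : F) d := by
    have := IsPrimitiveRoot.orderOf ((g ^ (N / d) : Fˣ) : F)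
    rwa [horder'] at this
  have hset : {x : F | x ^ 2 ^ s = x} = ↑(insert (0 : F) (nthRootsFinset d (1 : F))) := by
    ext x
    simp only [Set.mem_setOf_eq, Finset.coe_insert, Set.mem_insert_iff, Finset.mem_coe,
      mem_nthRootsFinset hd (1 : F)]
    constructor
    · intro hx
      rcases eq_or_ne x 0 with rfl | hx0
      · exact Or.inl rfl
      · right
        have : x ^ d * x = 1 * x := by
          rw [one_mul, ← pow_succ, ← hd2, hx]
        exact mul_right_cancel₀ hx0 this
    · rintro (rfl | hx)
      · exact zero_pow (by positivity)
      · rw [hd2, pow_succ, hx, one_mul]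
  rw [hset, Nat.card_coe_set_eq, Set.ncard_coe_finset,
    Finset.card_insert_of_notMem (fun h => ne_zero_of_mem_nthRootsFinset one_ne_zero h rfl),
    hprim.card_nthRootsFinset, ← hd2]

private lemma suz_odd {F : Type*} [Field F] [CharP F 2] {n m : ℕ} (hn : Odd n) (x : F)
    (hx : x ^ 2 ^ n = x) (h1 : x ^ 2 ^ m = x + 1) : False := by
  have key : ∀ k : ℕ, x ^ 2 ^ (m * k) = x + (k : F) := by
    intro k
    induction k with
    | zero => simp
    | succ k ih =>
      rw [Nat.mul_succ, pow_add, pow_mul, ih, add_pow_char_pow, h1]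
      have hk : ((k : F)) ^ 2 ^ m = (k : F) := by
        rw [← iterateFrobenius_def, map_natCast]
      rw [hk]
      push_cast
      ring
  have hmn : x ^ 2 ^ (m * n) = x := by
    rw [mul_comm]; exact suz_pow_mul x n hx m
  have hn0 : (n : F) = 0 := by
    have := key n
    rw [hmn] at this
    linear_combination -this
  have h2 : (2 : ℕ) ∣ n := (CharP.cast_eq_zero_iff F 2 n).mp hn0
  rw [Nat.odd_iff] at hn
  omega

/-- For the Suzuki-curve kernel polynomial `R̃(x) = x^{2q} + x^q + x² + x`
(`q = 2^{2h+1}`), the `𝔽₂`-dimension `c` of `Ker R̃ ∩ 𝔽_{2^n}` (expressed via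
`#(Ker R̃ ∩ 𝔽_{2^n}) = 2^c`) is `gcd(n, 2h+1)` for odd `n` and `gcd(n, 2h+1) + 1`
for even `n`. -/
theorem suzuki_radical_dimension (h : ℕ) (hh : 1 ≤ h) (n : ℕ) (hn : 0 < n) :
    Nat.card {x : GaloisField 2 n |
        x ^ (2 ^ (2 * h + 2)) + x ^ (2 ^ (2 * h + 1)) + x ^ 2 + x = 0} =
      if Odd n then 2 ^ Nat.gcd n (2 * h + 1) else 2 ^ (Nat.gcd n (2 * h + 1) + 1) := by
  classical
  set F := GaloisField 2 n with hF
  letI : Fintype F := Fintype.ofFinite F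
  have h2z : (2 : F) = 0 := CharTwo.two_eq_zero
  have hcard : Fintype.card F = 2 ^ n := by
    rw [← Nat.card_eq_fintype_card, GaloisField.card 2 n hn.ne']
  have hpowcard : ∀ x : F, x ^ 2 ^ n = x := by
    intro x
    have := FiniteField.pow_card x
    rwa [hcard] at this
  have htpos : 0 < Nat.gcd n (2 * h + 1) := Nat.gcd_pos_of_pos_left (2 * h + 1) hn
  have htn : Nat.gcd n (2 * h + 1) ∣ n := Nat.gcd_dvd_left n (2 * h + 1)
  have htm : Nat.gcd n (2 * h + 1) ∣ (2 * h + 1) := Nat.gcd_dvd_right n (2 * h + 1)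
  have hiff : ∀ x : F, (x ^ 2 ^ (2 * h + 2) + x ^ 2 ^ (2 * h + 1) + x ^ 2 + x = 0)
      ↔ (x ^ 2 ^ (2 * h + 1) = x ∨ x ^ 2 ^ (2 * h + 1) = x + 1) := by
    intro x
    have hsq : x ^ 2 ^ (2 * h + 2) = (x ^ 2 ^ (2 * h + 1)) ^ 2 := by
      rw [← pow_mul, ← pow_succ]
    have key : (x ^ 2 ^ (2 * h + 1) + x) * (x ^ 2 ^ (2 * h + 1) + x + 1)
        = x ^ 2 ^ (2 * h + 2) + x ^ 2 ^ (2 * h + 1) + x ^ 2 + x := by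
      rw [hsq]; linear_combination (x * x ^ 2 ^ (2 * h + 1)) * h2z
    constructor
    · intro h0
      rw [← key] at h0
      rcases mul_eq_zero.mp h0 with h1 | h1
      · left; linear_combination h1 - x * h2z
      · right; linear_combination h1 - (x + 1) * h2z
    · intro h1
      rw [← key]
      rcases h1 with h1 | h1
      · have hz : x ^ 2 ^ (2 * h + 1) + x = 0 := by linear_combination h1 + x * h2z
        rw [hz, zero_mul]
      · have hz : x ^ 2 ^ (2 * h + 1) + x + 1 = 0 := by
          linear_combination h1 + (x + 1) * h2z
        rw [hz, mul_zero]
  have hker : {x : F | x ^ 2 ^ (2 * h + 1) = x} = {x : F | x ^ 2 ^ Nat.gcd n (2 * h + 1) = x} := by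
    ext x
    simp only [Set.mem_setOf_eq]
    constructor
    · intro hx
      rw [Nat.gcd_comm]
      exact suz_gcd x (2 * h + 1) n hx (hpowcard x)
    · intro hx
      obtain ⟨k, hk⟩ := htm
      rw [hk]
      exact suz_pow_mul x (Nat.gcd n (2 * h + 1)) hx k
  have hker_card : Nat.card {x : F | x ^ 2 ^ (2 * h + 1) = x} = 2 ^ Nat.gcd n (2 * h + 1) := by
    rw [hker]
    exact suz_card n (Nat.gcd n (2 * h + 1)) hcard htpos htn
  by_cases hodd : Odd n
  · rw [if_pos hodd]
    have hSeq : {x : F | x ^ 2 ^ (2 * h + 2) + x ^ 2 ^ (2 * h + 1) + x ^ 2 + x = 0}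
        = {x : F | x ^ 2 ^ (2 * h + 1) = x} := by
      ext x
      simp only [Set.mem_setOf_eq, hiff x]
      constructor
      · rintro (hx | hx)
        · exact hx
        · exact absurd hx (fun hx => suz_odd hodd x (hpowcard x) hx)
      · exact Or.inl
    rw [hSeq, hker_card]
  · rw [if_neg hodd]
    rw [Nat.not_odd_iff_even] at hodd
    obtain ⟨ω, hω4, hω2⟩ : ∃ ω : F, ω ^ 2 ^ 2 = ω ∧ ¬ ω ^ 2 ^ 1 = ω := by
      by_contra hcon
      push_neg at hcon
      have hsub : {x : F | x ^ 2 ^ 2 = x} = {x : F | x ^ 2 ^ 1 = x} := by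
        ext x
        simp only [Set.mem_setOf_eq]
        constructor
        · exact fun hx => hcon x hx
        · intro hx
          have := suz_pow_mul x 1 hx 2
          simpa using this
      have hc2 : Nat.card {x : F | x ^ 2 ^ 2 = x} = 2 ^ 2 :=
        suz_card n 2 hcard (by norm_num) hodd.two_dvd
      have hc1 : Nat.card {x : F | x ^ 2 ^ 1 = x} = 2 ^ 1 :=
        suz_card n 1 hcard (by norm_num) (one_dvd n)
      rw [hsub, hc1] at hc2
      norm_num at hc2
    have hω4' : ω ^ (4 : ℕ) = ω := by
      have := hω4; norm_num at this; exact this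
    have hω : ω ^ 2 ^ (2 * h + 1) = ω + 1 := by
      have hωm : ω ^ 2 ^ (2 * h + 1) = ω ^ 2 := by
        rw [pow_succ, pow_mul, suz_pow_mul ω 2 hω4 h]
      have he : (ω ^ 2 + ω) ^ 2 = ω ^ 2 + ω := by
        linear_combination hω4' + ω ^ 3 * h2z
      have hne : ω ^ 2 + ω ≠ 0 := by
        intro h0
        apply hω2
        show ω ^ 2 ^ 1 = ω
        norm_num
        linear_combination h0 - ω * h2z
      have hmul : (ω ^ 2 + ω) * (ω ^ 2 + ω) = (ω ^ 2 + ω) * 1 := by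
        rw [mul_one]; linear_combination he
      have hone : ω ^ 2 + ω = 1 := mul_left_cancel₀ hne hmul
      rw [hωm]
      linear_combination hone - ω * h2z
    have hSeq : {x : F | x ^ 2 ^ (2 * h + 2) + x ^ 2 ^ (2 * h + 1) + x ^ 2 + x = 0}
        = {x : F | x ^ 2 ^ (2 * h + 1) = x}
          ∪ ((fun y => y + ω) '' {x : F | x ^ 2 ^ (2 * h + 1) = x}) := by
      ext x
      simp only [Set.mem_setOf_eq, hiff x, Set.mem_union, Set.mem_image]
      constructor
      · rintro (hx | hx)
        · exact Or.inl hx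
        · refine Or.inr ⟨x + ω, ?_, ?_⟩
          · show (x + ω) ^ 2 ^ (2 * h + 1) = x + ω
            rw [add_pow_char_pow, hx, hω]
            linear_combination h2z
          · show x + ω + ω = x
            linear_combination ω * h2z
      · rintro (hx | ⟨y, hy, rfl⟩)
        · exact Or.inl hx
        · right
          show (y + ω) ^ 2 ^ (2 * h + 1) = y + ω + 1
          rw [add_pow_char_pow, hy, hω]
          ring
    have hdisj : Disjoint {x : F | x ^ 2 ^ (2 * h + 1) = x}
        ((fun y => y + ω) '' {x : F | x ^ 2 ^ (2 * h + 1) = x}) := by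
      rw [Set.disjoint_left]
      rintro x hx ⟨y, hy, rfl⟩
      simp only [Set.mem_setOf_eq] at hx hy
      rw [add_pow_char_pow, hy, hω] at hx
      have hbad : (1 : F) = 0 := by linear_combination hx
      exact one_ne_zero hbad
    have himg_card : Nat.card ((fun y => y + ω) '' {x : F | x ^ 2 ^ (2 * h + 1) = x})
        = Nat.card {x : F | x ^ 2 ^ (2 * h + 1) = x} := by
      apply Nat.card_image_of_injective
      exact fun a b hab => by simpa using hab
    rw [hSeq, Nat.card_coe_set_eq,
      Set.ncard_union_eq hdisj (Set.toFinite _) (Set.toFinite _),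
      ← Nat.card_coe_set_eq, ← Nat.card_coe_set_eq, himg_card, hker_card]
    ring
end

section
/- Let d be an odd divisor of 2h+1 and q₀ = 2^h. Then Σ_{x ∈ 𝔽_{2^d}} (-1)^{Tr_{𝔽_{2^d}/𝔽₂}(x^{q₀+1})} = 0. -/
noncomputable instance (n : ℕ) : Fintype (GaloisField 2 n) := Fintype.ofFinite _

/-!
Since `d` is coprime to `2h`, `gcd(2^h + 1, 2^d - 1)` divides
`gcd(2^(2h) - 1, 2^d - 1) = 2^gcd(2h, d) - 1 = 1`, so `x ↦ x^(2^h + 1)` permutes `𝔽_{2^d}`.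
The sum is therefore the sum of the nontrivial additive character `x ↦ (-1)^Tr(x)` over the
field, which vanishes.
-/

open Function

theorem Nat.Coprime.two_pow_add_one_two_pow_sub_one {k d : ℕ} (hkd : (2 * k).Coprime d) :
    (2 ^ k + 1).Coprime (2 ^ d - 1) := by
  have hdvd : 2 ^ k + 1 ∣ 2 ^ (2 * k) - 1 := by
    rw [mul_comm, pow_mul, ← one_pow 2, Nat.sq_sub_sq]
    exact Dvd.intro _ rfl
  refine Nat.Coprime.coprime_dvd_left hdvd ?_
  rw [Nat.Coprime, Nat.pow_sub_one_gcd_pow_sub_one, hkd.gcd_eq_one]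
  rfl

theorem FiniteField.pow_bijective_of_coprime {F : Type*} [Field F] [Finite F] {n : ℕ}
    (hn : n ≠ 0) (hcop : (Nat.card F - 1).Coprime n) : Bijective (· ^ n : F → F) := by
  refine Finite.injective_iff_bijective.mp fun x y hxy => ?_
  rcases eq_or_ne x 0 with rfl | hx
  · rw [zero_pow hn, eq_comm, pow_eq_zero_iff hn] at hxy
    exact hxy.symm
  rcases eq_or_ne y 0 with rfl | hy
  · rwa [zero_pow hn, pow_eq_zero_iff hn] at hxy
  rw [← Nat.card_units] at hcop
  have := hcop.pow_left_bijective.injective (a₁ := Units.mk0 x hx) (a₂ := Units.mk0 y hy)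
    (Units.ext (by simpa using hxy))
  simpa using congrArg Units.val this

def ZMod.signChar : AddChar (ZMod 2) ℤ where
  toFun a := (-1) ^ a.val
  map_zero_eq_one' := rfl
  map_add_eq_mul' := by decide

theorem ZMod.signChar_one : ZMod.signChar 1 = -1 := rfl

theorem FiniteField.sum_neg_one_pow_trace_eq_zero (F : Type*) [Field F] [Fintype F]
    [Algebra (ZMod 2) F] :
    ∑ x : F, (-1 : ℤ) ^ (Algebra.trace (ZMod 2) F x).val = 0 := by
  obtain ⟨c, hc⟩ := Algebra.trace_surjective (ZMod 2) F 1
  refine AddChar.sum_eq_zero_of_ne_one (ψ := ZMod.signChar.compAddMonoidHom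
    (Algebra.trace (ZMod 2) F).toAddMonoidHom) (AddChar.ne_one_iff.mpr ⟨c, ?_⟩)
  simp [hc, ZMod.signChar_one]

theorem suzuki_first_sum_vanishes_general (h d : ℕ) (hdvd : d ∣ 2 * h + 1) :
    ∑ x : GaloisField 2 d,
        (-1 : ℤ) ^ (Algebra.trace (ZMod 2) (GaloisField 2 d) (x ^ (2 ^ h + 1))).val = 0 := by
  have hd : d ≠ 0 := by rintro rfl; simp at hdvd
  have hcop : (2 * h).Coprime d :=
    (Nat.coprime_self_add_right.mpr (Nat.coprime_one_right _)).coprime_dvd_right hdvd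
  have hbij : Bijective (· ^ (2 ^ h + 1) : GaloisField 2 d → _) := by
    refine FiniteField.pow_bijective_of_coprime (by positivity) ?_
    rw [GaloisField.card 2 d hd]
    exact hcop.two_pow_add_one_two_pow_sub_one.symm
  rw [hbij.sum_comp (fun y => (-1 : ℤ) ^ (Algebra.trace (ZMod 2) _ y).val)]
  exact FiniteField.sum_neg_one_pow_trace_eq_zero _

/-- For `d` an odd divisor of `2h+1` and `q₀ = 2^h`,
`∑_{x ∈ 𝔽_{2^d}} (-1)^{Tr(x^{q₀+1})} = 0`. -/
theorem suzuki_first_sum_vanishes (h d : ℕ) (hd : Odd d) (hdvd : d ∣ 2 * h + 1) :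
    ∑ x : GaloisField 2 d,
        (-1 : ℤ) ^ (Algebra.trace (ZMod 2) (GaloisField 2 d) (x ^ (2 ^ h + 1))).val = 0 :=
  suzuki_first_sum_vanishes_general h d hdvd
end

section
/- Let h ≥ 1, q₀ = 2^h, q = 2^{2h+1}, and let S_h be the smooth projective model of the curve y^q + y = x^{q₀}(x^q + x) over 𝔽₂ (the Suzuki curve). For every n ≥ 1, the number of 𝔽_{2^n}-rational points satisfies #S_h(𝔽_{2^n}) = 2^n + 1 + (2^{gcd(n, 2h+1)} - 1) · S_n(f), where S_n(f) = Σ_{x ∈ 𝔽_{2^n}} (-1)^{Tr_{𝔽_{2^n}/𝔽₂}(x^{q₀}(x^q + x))}. -/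
open Finset Polynomial Function LinearMap

section FixedPoints

variable {F : Type*} [Field F] [Fintype F]

theorem card_filter_pow_eq_self [DecidableEq F] {s : ℕ} (hs : 1 < s)
    (hdvd : s - 1 ∣ Fintype.card F - 1) : #{z : F | z ^ s = z} = s := by
  have hq : 1 < Fintype.card F := Fintype.one_lt_card
  have hfactor : ∀ k, 1 ≤ k → (X ^ k - X : F[X]) = X * (X ^ (k - 1) - 1) := fun k hk => by
    rw [mul_sub, mul_one, ← pow_succ', Nat.sub_add_cancel hk]
  have hdvdX : (X ^ s - X : F[X]) ∣ X ^ Fintype.card F - X := by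
    obtain ⟨k, hk⟩ := hdvd
    rw [hfactor s hs.le, hfactor _ hq.le, hk, pow_mul]
    exact mul_dvd_mul_left X (by simpa using sub_dvd_pow_sub_pow (X ^ (s - 1) : F[X]) 1 k)
  have hne := FiniteField.X_pow_card_sub_X_ne_zero F hq
  have hroots : (X ^ s - X : F[X]).roots ≤ univ.val :=
    FiniteField.roots_X_pow_card_sub_X F ▸ roots.le_of_dvd hne hdvdX
  have hsplits : (X ^ s - X : F[X]).Splits := by
    refine Splits.of_dvd ?_ hne hdvdX
    simpa [Nat.card_eq_fintype_card] using splits_X_pow_nat_card_sub_X (K := F)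
  have hfilter : ({z : F | z ^ s = z} : Finset F) = (X ^ s - X : F[X]).roots.toFinset := by
    ext z
    simp [mem_roots (FiniteField.X_pow_card_sub_X_ne_zero F hs), sub_eq_zero]
  rw [hfilter, Multiset.toFinset_card_of_nodup (Multiset.nodup_of_le hroots univ.nodup),
    splits_iff_card_roots.mp hsplits, FiniteField.X_pow_card_sub_X_natDegree_eq F hs]

theorem pow_pow_eq_self_iff_pow_pow_gcd {p n : ℕ} (hF : Fintype.card F = p ^ n) (m : ℕ) (z : F) :
    z ^ p ^ m = z ↔ z ^ p ^ n.gcd m = z := by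
  have hper : ∀ k, IsPeriodicPt (· ^ p) k z ↔ z ^ p ^ k = z := fun k => by
    rw [IsPeriodicPt, IsFixedPt, pow_iterate]
  have hn : IsPeriodicPt (· ^ p) n z := (hper n).mpr (hF ▸ FiniteField.pow_card z)
  rw [← hper, ← hper]
  exact ⟨hn.gcd, fun h => h.trans_dvd (Nat.gcd_dvd_right n m)⟩

theorem card_filter_pow_pow_eq_self [DecidableEq F] {p n : ℕ} (hF : Fintype.card F = p ^ n)
    (m : ℕ) : #{z : F | z ^ p ^ m = z} = p ^ n.gcd m := by
  have h1 : 1 < p ^ n := hF ▸ Fintype.one_lt_card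
  have hn : n ≠ 0 := by rintro rfl; simp at h1
  have hp : 1 < p := (Nat.one_lt_pow_iff hn).mp h1
  rw [filter_congr fun z _ => pow_pow_eq_self_iff_pow_pow_gcd hF m z]
  have hgcd : n.gcd m ≠ 0 := (Nat.gcd_pos_of_pos_left m (Nat.pos_of_ne_zero hn)).ne'
  refine card_filter_pow_eq_self (Nat.one_lt_pow hgcd hp) ?_
  rw [hF]
  exact Nat.pow_sub_one_dvd_pow_sub_one p (Nat.gcd_dvd_left n m)

end FixedPoints

theorem FiniteField.trace_pow_pow {F : Type*} [Field F] [Finite F] {p : ℕ} [Fact p.Prime]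
    [Algebra (ZMod p) F] (e : ℕ) (x : F) :
    Algebra.trace (ZMod p) F (x ^ p ^ e) = Algebra.trace (ZMod p) F x := by
  have := Algebra.trace_eq_of_algEquiv (FiniteField.frobeniusAlgEquivOfAlgebraic (ZMod p) F ^ e) x
  rwa [AlgEquiv.coe_pow, FiniteField.coe_frobeniusAlgEquivOfAlgebraic_iterate, ZMod.card] at this

section TraceSign

variable {F : Type*} [CommRing F] [Algebra (ZMod 2) F]

noncomputable def traceSign (x : F) : ℤ := (-1) ^ (Algebra.trace (ZMod 2) F x).val

theorem traceSign_zero : traceSign (0 : F) = 1 := by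
  simp [traceSign]

theorem traceSign_add (x y : F) : traceSign (x + y) = traceSign x * traceSign y := by
  unfold traceSign
  rw [map_add]
  generalize Algebra.trace (ZMod 2) F x = a
  generalize Algebra.trace (ZMod 2) F y = b
  revert a b
  decide

theorem traceSign_eq_one_iff (x : F) : traceSign x = 1 ↔ Algebra.trace (ZMod 2) F x = 0 := by
  unfold traceSign
  generalize Algebra.trace (ZMod 2) F x = a
  revert a
  decide

theorem traceSign_eq_neg_one_iff (x : F) : traceSign x = -1 ↔ Algebra.trace (ZMod 2) F x ≠ 0 := by
  unfold traceSign
  generalize Algebra.trace (ZMod 2) F x = a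
  revert a
  decide

theorem sum_traceSign_mul_eq_zero (W : Submodule (ZMod 2) F) [Fintype W] {t z₀ : F}
    (hz₀ : z₀ ∈ W) (ht : Algebra.trace (ZMod 2) F (t * z₀) ≠ 0) :
    ∑ z : W, traceSign (t * z) = 0 := by
  have hshift := (Equiv.sum_comp (Equiv.addRight (⟨z₀, hz₀⟩ : W)) fun z : W => traceSign (t * z))
  simp only [Equiv.coe_addRight, Submodule.coe_add, mul_add, traceSign_add,
    (traceSign_eq_neg_one_iff _).mpr ht, mul_neg_one, sum_neg_distrib] at hshift
  linarith

end TraceSign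

section ArtinSchreier

variable (F : Type*) [Field F] [CharP F 2] [Algebra (ZMod 2) F]

def artinSchreier (e : ℕ) : F →ₗ[ZMod 2] F :=
  ((iterateFrobenius F 2 e).toAddMonoidHom + AddMonoidHom.id F).toZModLinearMap 2

variable {F}

theorem artinSchreier_apply (e : ℕ) (y : F) : artinSchreier F e y = y ^ 2 ^ e + y := rfl

theorem mem_ker_artinSchreier {e : ℕ} {z : F} : z ∈ ker (artinSchreier F e) ↔ z ^ 2 ^ e = z := by
  rw [mem_ker, artinSchreier_apply, CharTwo.add_eq_zero]

variable [Fintype F]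

theorem trace_artinSchreier_mul {e : ℕ} (y : F) {z : F} (hz : z ^ 2 ^ e = z) :
    Algebra.trace (ZMod 2) F (artinSchreier F e y * z) = 0 := by
  have : artinSchreier F e y * z = (y * z) ^ 2 ^ e + y * z := by
    rw [artinSchreier_apply, mul_pow, hz, add_mul]
  rw [this, map_add, FiniteField.trace_pow_pow, CharTwo.add_self_eq_zero]

theorem range_artinSchreier (e : ℕ) :
    range (artinSchreier F e) =
      (Algebra.traceForm (ZMod 2) F).orthogonal (ker (artinSchreier F e)) := by
  have : FiniteDimensional (ZMod 2) F := Module.Finite.of_finite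
  refine Submodule.eq_of_le_of_finrank_eq ?_ ?_
  · rintro _ ⟨y, rfl⟩
    rw [BilinForm.mem_orthogonal_iff]
    intro z hz
    rw [Algebra.traceForm_apply, mul_comm]
    exact trace_artinSchreier_mul y (mem_ker_artinSchreier.mp hz)
  · rw [BilinForm.finrank_orthogonal (traceForm_nondegenerate _ _),
      ← finrank_range_add_finrank_ker (artinSchreier F e)]
    omega

theorem card_filter_artinSchreier_eq [DecidableEq F] (e : ℕ) (t : F) :
    (#{y : F | y ^ 2 ^ e + y = t} : ℤ) = ∑ z ∈ {z : F | z ^ 2 ^ e = z}, traceSign (t * z) := by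
  have hker : ∀ z, z ∈ ({z : F | z ^ 2 ^ e = z} : Finset F) ↔ z ∈ ker (artinSchreier F e) := by
    simp only [mem_filter, mem_univ, true_and, mem_ker_artinSchreier, implies_true]
  by_cases ht : t ∈ range (artinSchreier F e)
  · have hsign : ∀ z ∈ ({z : F | z ^ 2 ^ e = z} : Finset F), traceSign (t * z) = 1 := by
      intro z hz
      rw [range_artinSchreier, BilinForm.mem_orthogonal_iff] at ht
      rw [traceSign_eq_one_iff, mul_comm]
      exact ht z ((hker z).mp hz)
    have hfiber := AddMonoidHom.card_fiber_eq_of_mem_range (artinSchreier F e) ht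
      ⟨0, map_zero _⟩
    simp only [artinSchreier_apply, CharTwo.add_eq_zero] at hfiber
    rw [sum_congr rfl hsign, sum_const, nsmul_one]
    exact_mod_cast hfiber
  · obtain ⟨z₀, hz₀, htz₀⟩ :
        ∃ z₀ ∈ ker (artinSchreier F e), Algebra.trace (ZMod 2) F (t * z₀) ≠ 0 := by
      rw [range_artinSchreier, BilinForm.mem_orthogonal_iff] at ht
      push Not at ht
      simpa [mul_comm] using ht
    have hempty : ({y : F | y ^ 2 ^ e + y = t} : Finset F) = ∅ :=
      filter_eq_empty_iff.mpr fun y _ hy => ht ⟨y, hy⟩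
    have : Fintype (ker (artinSchreier F e)) := Fintype.ofFinite _
    rw [hempty, sum_subtype _ hker, sum_traceSign_mul_eq_zero _ hz₀ htz₀, card_empty, Nat.cast_zero]

end ArtinSchreier

theorem Nat.card_setOf_prod_eq_sum {α β : Type*} [Fintype α] [Fintype β] (P : α → β → Prop)
    [∀ a, DecidablePred (P a)] : Nat.card {p : α × β | P p.1 p.2} = ∑ a, #{b | P a b} := by
  rw [Set.coe_ofPred, Nat.card_congr (Equiv.subtypeProdEquivSigmaSubtype P), Nat.card_sigma]
  simp only [Nat.card_eq_fintype_card, Fintype.card_subtype]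

theorem Nat.coprime_two_pow_add_one_two_pow_sub_one (h : ℕ) :
    Nat.Coprime (2 ^ h + 1) (2 ^ (2 * h + 1) - 1) := by
  rw [← Nat.isCoprime_iff_coprime]
  push_cast [Nat.cast_sub Nat.one_le_two_pow]
  exact ⟨-(2 ^ (h + 1) - 2), 1, by ring⟩

theorem exists_pow_two_pow_add_one_eq {K : Type*} [Field K] {h : ℕ} {z : K}
    (hz : z ^ 2 ^ (2 * h + 1) = z) (hz0 : z ≠ 0) :
    ∃ t : K, t ^ 2 ^ (2 * h + 1) = t ∧ t ^ (2 ^ h + 1) = z := by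
  have hunit : z ^ (2 ^ (2 * h + 1) - 1) = 1 := by
    rw [pow_sub₀ z hz0 Nat.one_le_two_pow, hz, pow_one, mul_inv_cancel₀ hz0]
  obtain ⟨k, hk⟩ := exists_pow_eq_self_of_coprime
    ((Nat.coprime_two_pow_add_one_two_pow_sub_one h).coprime_dvd_right
      (orderOf_dvd_of_pow_eq_one hunit))
  exact ⟨z ^ k, by rw [← pow_mul, mul_comm, pow_mul, hz], by rw [← pow_mul, mul_comm, pow_mul, hk]⟩

section Suzuki

def suzukiPoly {R : Type*} [CommRing R] (h : ℕ) (x : R) : R :=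
  x ^ 2 ^ h * (x ^ 2 ^ (2 * h + 1) + x)

theorem suzukiPoly_mul {R : Type*} [CommRing R] {h : ℕ} {t : R} (ht : t ^ 2 ^ (2 * h + 1) = t)
    (x : R) : suzukiPoly h (t * x) = t ^ (2 ^ h + 1) * suzukiPoly h x := by
  simp only [suzukiPoly, mul_pow, ht]
  ring

variable {F : Type*} [Field F] [Fintype F] [Algebra (ZMod 2) F]

theorem sum_traceSign_suzukiPoly_mul {h : ℕ} {z : F} (hz : z ^ 2 ^ (2 * h + 1) = z)
    (hz0 : z ≠ 0) :
    ∑ x : F, traceSign (suzukiPoly h x * z) = ∑ x : F, traceSign (suzukiPoly h x) := by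
  obtain ⟨t, ht, rfl⟩ := exists_pow_two_pow_add_one_eq hz hz0
  have ht0 : t ≠ 0 := by rintro rfl; simp at hz0
  refine Fintype.sum_equiv (Equiv.mulLeft₀ t ht0) _ _ fun x => ?_
  change _ = traceSign (suzukiPoly h (t * x))
  rw [suzukiPoly_mul ht, mul_comm]

theorem card_suzuki_affine [CharP F 2] {n : ℕ} (hF : Fintype.card F = 2 ^ n) (h : ℕ) :
    (Nat.card {p : F × F | p.2 ^ 2 ^ (2 * h + 1) + p.2 = suzukiPoly h p.1} : ℤ) =
      2 ^ n + (2 ^ n.gcd (2 * h + 1) - 1) * ∑ x : F, traceSign (suzukiPoly h x) := by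
  classical
  set K : Finset F := {z | z ^ 2 ^ (2 * h + 1) = z}
  have h0K : (0 : F) ∈ K := by simp [K]
  have hK : #K = 2 ^ n.gcd (2 * h + 1) := card_filter_pow_pow_eq_self hF _
  calc _ = ∑ x : F, (#{y : F | y ^ 2 ^ (2 * h + 1) + y = suzukiPoly h x} : ℤ) := by
        rw [Nat.card_setOf_prod_eq_sum (fun x y => y ^ 2 ^ (2 * h + 1) + y = suzukiPoly h x),
          Nat.cast_sum]
    _ = ∑ z ∈ K, ∑ x : F, traceSign (suzukiPoly h x * z) := by
        rw [sum_comm]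
        exact sum_congr rfl fun x _ => card_filter_artinSchreier_eq _ _
    _ = ∑ x : F, traceSign (suzukiPoly h x * 0) +
          ∑ z ∈ K.erase 0, ∑ x : F, traceSign (suzukiPoly h x * z) := (add_sum_erase _ _ h0K).symm
    _ = _ := by
        rw [sum_congr rfl fun z hz =>
            sum_traceSign_suzukiPoly_mul (mem_filter.mp (mem_of_mem_erase hz)).2
              (ne_of_mem_erase hz),
          sum_const, card_erase_of_mem h0K, hK, nsmul_eq_mul, Nat.cast_sub Nat.one_le_two_pow]
        simp [traceSign_zero, hF]

end Suzuki

theorem suzuki_point_count_general (h n : ℕ) (hn : 0 < n) :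
    (Nat.card {p : GaloisField 2 n × GaloisField 2 n |
        p.2 ^ (2 ^ (2 * h + 1)) + p.2 = p.1 ^ (2 ^ h) * (p.1 ^ (2 ^ (2 * h + 1)) + p.1)} : ℤ)
      + 1 =
    2 ^ n + 1 + (2 ^ Nat.gcd n (2 * h + 1) - 1) *
      ∑ x : GaloisField 2 n,
        (-1 : ℤ) ^ (Algebra.trace (ZMod 2) (GaloisField 2 n)
          (x ^ (2 ^ h) * (x ^ (2 ^ (2 * h + 1)) + x))).val := by
  have hF : Fintype.card (GaloisField 2 n) = 2 ^ n := by
    rw [← Nat.card_eq_fintype_card, GaloisField.card 2 n hn.ne']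
  have := card_suzuki_affine hF h
  unfold suzukiPoly traceSign at this
  rw [this]
  ring

/-- The number of rational points of the Suzuki curve `y^q + y = x^{q₀}(x^q + x)`
(`q₀ = 2^h`, `q = 2^{2h+1}`) over `𝔽_{2^n}`: the smooth projective model has a single
point at infinity, so `#S_h(𝔽_{2^n})` is the number of affine points plus one, and it
equals `2^n + 1 + (2^{gcd(n,2h+1)} - 1) · S_n(f)`. -/
theorem suzuki_point_count (h n : ℕ) (hh : 1 ≤ h) (hn : 0 < n) :
    (Nat.card {p : GaloisField 2 n × GaloisField 2 n |
        p.2 ^ (2 ^ (2 * h + 1)) + p.2 = p.1 ^ (2 ^ h) * (p.1 ^ (2 ^ (2 * h + 1)) + p.1)} : ℤ)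
      + 1 =
    2 ^ n + 1 + (2 ^ Nat.gcd n (2 * h + 1) - 1) *
      ∑ x : GaloisField 2 n,
        (-1 : ℤ) ^ (Algebra.trace (ZMod 2) (GaloisField 2 n)
          (x ^ (2 ^ h) * (x ^ (2 ^ (2 * h + 1)) + x))).val :=
  suzuki_point_count_general h n hn
end
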